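/- arXiv:1611.07099 — 8 statements merged into one kernel-verified Lean document; each statement's English description precedes it below -/
import Mathlib

section
/- Let g : [0,T] → ℝ be continuous with g(0) = 0, let t ∈ (0,T], and let G_k = G_k(t) be the running main extremum values of g at time t. Then 2|G_1| ≥ |G_2 − G_1| ≥ |G_3 − G_2| ≥ ⋯ ≥ |G_i − G_{i−1}| ≥ ⋯ for all i ≥ 2. Moreover, if g is piecewise monotone on [0,t], then only finitely many of the differences G_i − G_{i−1} are nonzero. -/
open MeasureTheory Set

noncomputable section

def nextUp (g : ℝ → ℝ) (t τk : ℝ) : ℝ × ℝ :=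
  (sSup {s | s ∈ Icc τk t ∧ g s = sSup (g '' Icc τk t)}, sSup (g '' Icc τk t))

def nextDown (g : ℝ → ℝ) (t τk : ℝ) : ℝ × ℝ :=
  (sSup {s | s ∈ Icc τk t ∧ g s = sInf (g '' Icc τk t)}, sInf (g '' Icc τk t))

def tau1 (g : ℝ → ℝ) (t : ℝ) : ℝ :=
  sSup {τ | τ ∈ Icc 0 t ∧ |g τ| = sSup ((fun τ => |g τ|) '' Icc 0 t)}

open Classical in
/-- `mainPair g t k = (τ_{k+1}, G_{k+1}(t))`: the running main extremum values
of `g` on `[0,t]` together with the (last) times at which they are attained. -/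
def mainPair (g : ℝ → ℝ) (t : ℝ) : ℕ → ℝ × ℝ
  | 0 => (tau1 g t, g (tau1 g t))
  | k + 1 =>
      if g (tau1 g t) ≤ 0 ↔ Even k then nextUp g t (mainPair g t k).1
      else nextDown g t (mainPair g t k).1

/-- The running main extremum values `G_k(t)` of `g` on `[0,t]`. -/
def runningG (g : ℝ → ℝ) (t : ℝ) : ℕ → ℝ
  | 0 => sSup ((fun τ => |g τ|) '' Icc 0 t)
  | k + 1 => (mainPair g t k).2

/-- `g` is piecewise monotone on `[a,b]`. -/
def PiecewiseMonotoneOn (g : ℝ → ℝ) (a b : ℝ) : Prop :=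
  ∃ (n : ℕ) (p : ℕ → ℝ), p 0 = a ∧ p n = b ∧ (∀ i < n, p i ≤ p (i + 1)) ∧
    ∀ i < n, MonotoneOn g (Icc (p i) (p (i + 1))) ∨ AntitoneOn g (Icc (p i) (p (i + 1)))

/-!
Let `τ_k` be the last time at which `G_k` is attained. Then `τ_k ≤ τ_{k+1}` and `G_{k+1}` is the
maximum or the minimum of `g` over `[τ_k, t]`, alternately. So `G_{k+2} = g(τ_{k+2})` is bounded
on one side by `G_k`, an extremum over `[τ_{k-1}, t] ∋ τ_{k+2}`, and on the other by `G_{k+1}`,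
since `G_{k+2}` is the opposite extremum over `[τ_{k+1}, t] ∋ τ_{k+1}`: the value ranges of
consecutive steps are nested, which gives the decreasing increments (and `|G_2| ≤ |G_1|` because
`G_1` maximises `|g|`). If one increment vanishes, all later values are squeezed onto it. For a
piecewise monotone `g` some increment must vanish: otherwise the `τ_k` increase strictly while
`g` zigzags strictly along them, and two of the `τ_k` two steps apart would lie in one monotone
piece.
-/

theorem exists_mem_Ico_succ {α : Type*} [LinearOrder α] {p : ℕ → α} {y : α} (h0 : p 0 ≤ y) :
    ∀ {m : ℕ}, y < p m → ∃ i < m, y ∈ Ico (p i) (p (i + 1))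
  | 0, h => absurd h0 (not_le.2 h)
  | m + 1, h => by
    by_cases hm : y < p m
    · obtain ⟨i, hi, hy⟩ := exists_mem_Ico_succ h0 hm
      exact ⟨i, by omega, hy⟩
    · exact ⟨m, m.lt_succ_self, not_lt.1 hm, h⟩

/-- Two even-indexed terms of `x` fall in the same monotone piece, and then so do the terms
between them. -/
theorem PiecewiseMonotoneOn.exists_monotone_triple {g : ℝ → ℝ} {a b : ℝ}
    (hg : PiecewiseMonotoneOn g a b) {x : ℕ → ℝ} (hx : StrictMono x) (hxab : ∀ k, x k ∈ Icc a b) :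
    ∃ k, (g (x k) ≤ g (x (k + 1)) ∧ g (x (k + 1)) ≤ g (x (k + 2))) ∨
      (g (x (k + 1)) ≤ g (x k) ∧ g (x (k + 2)) ≤ g (x (k + 1))) := by
  obtain ⟨n, p, hp0, hpn, -, hpiece⟩ := hg
  have piece : ∀ j, ∃ i < n, x (2 * j) ∈ Ico (p i) (p (i + 1)) := fun j =>
    exists_mem_Ico_succ (hp0 ▸ (hxab _).1)
      (hpn ▸ (hx (Nat.lt_succ_self (2 * j))).trans_le (hxab _).2)
  choose i hin hxi using piece
  obtain ⟨j, j', hne, heq⟩ :=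
    Finite.exists_ne_map_eq_of_infinite fun j => (⟨i j, hin j⟩ : Fin n)
  wlog hjj : j < j' generalizing j j'
  · exact this j' j hne.symm heq.symm (by omega)
  have hij : i j = i j' := congrArg Fin.val heq
  have mem : ∀ l ≤ 2, x (2 * j + l) ∈ Icc (p (i j)) (p (i j + 1)) := fun l hl =>
    ⟨(hxi j).1.trans (hx.monotone (by omega)),
      (hx.monotone (by omega : 2 * j + l ≤ 2 * j')).trans (hij ▸ (hxi j').2.le)⟩
  have hle : ∀ l < 2, x (2 * j + l) ≤ x (2 * j + l + 1) := fun l _ => hx.monotone (by omega)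
  refine ⟨2 * j, ?_⟩
  rcases hpiece (i j) (hin j) with h | h
  · exact Or.inl ⟨h (mem 0 (by omega)) (mem 1 (by omega)) (hle 0 (by omega)),
      h (mem 1 (by omega)) (mem 2 le_rfl) (hle 1 (by omega))⟩
  · exact Or.inr ⟨h (mem 0 (by omega)) (mem 1 (by omega)) (hle 0 (by omega)),
      h (mem 1 (by omega)) (mem 2 le_rfl) (hle 1 (by omega))⟩

theorem IsCompact.sSup_setOf_mem_and_eq {f : ℝ → ℝ} {K : Set ℝ} (hK : IsCompact K)
    (hf : ContinuousOn f K) {c : ℝ} (hc : c ∈ f '' K) :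
    sSup {s | s ∈ K ∧ f s = c} ∈ K ∧ f (sSup {s | s ∈ K ∧ f s = c}) = c := by
  refine (hK.of_isClosed_subset ?_ fun _ => And.left).sSup_mem ?_
  · exact hf.preimage_isClosed_of_isClosed hK.isClosed isClosed_singleton
  · obtain ⟨s, hs, rfl⟩ := hc
    exact ⟨s, hs, rfl⟩

section Extrema

variable {g : ℝ → ℝ} {t τ : ℝ}

theorem nextUp_spec (hg : ContinuousOn g (Icc τ t)) (hτ : τ ≤ t) :
    (nextUp g t τ).1 ∈ Icc τ t ∧ g (nextUp g t τ).1 = (nextUp g t τ).2 ∧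
      ∀ s ∈ Icc τ t, g s ≤ (nextUp g t τ).2 := by
  have hK : IsCompact (Icc τ t) := isCompact_Icc
  obtain ⟨hmem, hval⟩ := hK.sSup_setOf_mem_and_eq hg
    ((hK.image_of_continuousOn hg).sSup_mem ((nonempty_Icc.2 hτ).image g))
  exact ⟨hmem, hval, fun s hs => le_csSup (hK.bddAbove_image hg) (mem_image_of_mem g hs)⟩

theorem nextDown_spec (hg : ContinuousOn g (Icc τ t)) (hτ : τ ≤ t) :
    (nextDown g t τ).1 ∈ Icc τ t ∧ g (nextDown g t τ).1 = (nextDown g t τ).2 ∧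
      ∀ s ∈ Icc τ t, (nextDown g t τ).2 ≤ g s := by
  have hK : IsCompact (Icc τ t) := isCompact_Icc
  obtain ⟨hmem, hval⟩ := hK.sSup_setOf_mem_and_eq hg
    ((hK.image_of_continuousOn hg).sInf_mem ((nonempty_Icc.2 hτ).image g))
  exact ⟨hmem, hval, fun s hs => csInf_le (hK.bddBelow_image hg) (mem_image_of_mem g hs)⟩

theorem tau1_spec (hg : ContinuousOn g (Icc 0 t)) (ht : 0 ≤ t) :
    tau1 g t ∈ Icc 0 t ∧ ∀ s ∈ Icc 0 t, |g s| ≤ |g (tau1 g t)| := by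
  have hK : IsCompact (Icc 0 t) := isCompact_Icc
  obtain ⟨hmem, hval⟩ := hK.sSup_setOf_mem_and_eq hg.abs
      ((hK.image_of_continuousOn hg.abs).sSup_mem ((nonempty_Icc.2 ht).image _))
  refine ⟨hmem, fun s hs => ?_⟩
  rw [tau1, hval]
  exact le_csSup (hK.bddAbove_image hg.abs) (mem_image_of_mem (fun s => |g s|) hs)

end Extrema

theorem abs_sub_le_abs_sub_of_mul_le_mul {e a b c : ℝ} (he : e = 1 ∨ e = -1)
    (hab : e * a ≤ e * b) (hbc : e * b ≤ e * c) : |b - a| ≤ |c - a| := by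
  rcases he with rfl | rfl
  · rw [abs_of_nonneg (by linarith), abs_of_nonneg (by linarith)]
    linarith
  · rw [abs_of_nonpos (by linarith), abs_of_nonpos (by linarith)]
    linarith

/-- `+1` when `G_{k+1}(t)` is a running maximum of `g`, `-1` when it is a running minimum. -/
def mainSign (g : ℝ → ℝ) (t : ℝ) (k : ℕ) : ℝ :=
  if g (tau1 g t) ≤ 0 ↔ Odd k then 1 else -1

section MainPair

variable {g : ℝ → ℝ} {t : ℝ}

theorem mainSign_eq_one_or (k : ℕ) : mainSign g t k = 1 ∨ mainSign g t k = -1 := by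
  unfold mainSign
  split_ifs <;> simp

theorem mainSign_succ (k : ℕ) : mainSign g t (k + 1) = -mainSign g t k := by
  simp only [mainSign, Nat.odd_add_one]
  split_ifs <;> norm_num <;> tauto

theorem mainSign_zero_mul : mainSign g t 0 * g (tau1 g t) = |g (tau1 g t)| := by
  simp only [mainSign, Nat.not_odd_zero, iff_false]
  split_ifs with h
  · rw [neg_one_mul, abs_of_nonpos h]
  · rw [one_mul, abs_of_pos (not_le.1 h)]

variable (hg : ContinuousOn g (Icc 0 t)) (ht : 0 ≤ t)
include hg

theorem mainPair_succ_spec {k : ℕ} (hk : (mainPair g t k).1 ∈ Icc 0 t) :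
    (mainPair g t (k + 1)).1 ∈ Icc (mainPair g t k).1 t ∧
      g (mainPair g t (k + 1)).1 = (mainPair g t (k + 1)).2 ∧
      ∀ s ∈ Icc (mainPair g t k).1 t,
        mainSign g t (k + 1) * g s ≤ mainSign g t (k + 1) * (mainPair g t (k + 1)).2 := by
  have hgk : ContinuousOn g (Icc (mainPair g t k).1 t) := hg.mono (Icc_subset_Icc_left hk.1)
  have hsign : mainSign g t (k + 1) = if g (tau1 g t) ≤ 0 ↔ Even k then 1 else -1 := by
    simp only [mainSign, Nat.odd_add_one, Nat.not_odd_iff_even]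
  rw [hsign, mainPair]
  split_ifs
  · obtain ⟨hm, hv, hb⟩ := nextUp_spec hgk hk.2
    exact ⟨hm, hv, fun s hs => by simpa using hb s hs⟩
  · obtain ⟨hm, hv, hb⟩ := nextDown_spec hgk hk.2
    exact ⟨hm, hv, fun s hs => by simpa using hb s hs⟩

include ht

theorem mainPair_fst_mem : ∀ k, (mainPair g t k).1 ∈ Icc 0 t
  | 0 => (tau1_spec hg ht).1
  | k + 1 =>
    have hk := mainPair_fst_mem k
    ⟨hk.1.trans (mainPair_succ_spec hg hk).1.1, (mainPair_succ_spec hg hk).1.2⟩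

theorem apply_mainPair_fst : ∀ k, g (mainPair g t k).1 = (mainPair g t k).2
  | 0 => rfl
  | k + 1 => (mainPair_succ_spec hg (mainPair_fst_mem hg ht k)).2.1

theorem monotone_mainPair_fst : Monotone fun k => (mainPair g t k).1 :=
  monotone_nat_of_le_succ fun k => (mainPair_succ_spec hg (mainPair_fst_mem hg ht k)).1.1

theorem abs_mainPair_snd_le (k : ℕ) : |(mainPair g t k).2| ≤ |(mainPair g t 0).2| := by
  rw [← apply_mainPair_fst hg ht]
  exact (tau1_spec hg ht).2 _ (mainPair_fst_mem hg ht k)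

theorem mainSign_mul_le_mainSign_mul_mainPair_snd :
    ∀ k, ∀ s ∈ Icc (mainPair g t k).1 t,
      mainSign g t k * g s ≤ mainSign g t k * (mainPair g t k).2
  | 0, s, hs => by
    have hs0 : s ∈ Icc 0 t := ⟨(tau1_spec hg ht).1.1.trans hs.1, hs.2⟩
    calc mainSign g t 0 * g s ≤ |mainSign g t 0 * g s| := le_abs_self _
      _ = |g s| := by rcases mainSign_eq_one_or (g := g) (t := t) 0 with h | h <;> simp [h]
      _ ≤ mainSign g t 0 * (mainPair g t 0).2 := mainSign_zero_mul ▸ (tau1_spec hg ht).2 s hs0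
  | k + 1, s, hs => (mainPair_succ_spec hg (mainPair_fst_mem hg ht k)).2.2 s
      ⟨(monotone_mainPair_fst hg ht k.le_succ).trans hs.1, hs.2⟩

theorem mainSign_mul_mainPair_snd_le_succ (k : ℕ) :
    mainSign g t (k + 1) * (mainPair g t k).2 ≤
      mainSign g t (k + 1) * (mainPair g t (k + 1)).2 := by
  have hk := mainPair_fst_mem hg ht k
  rw [← apply_mainPair_fst hg ht k]
  exact (mainPair_succ_spec hg hk).2.2 _ ⟨le_rfl, hk.2⟩

theorem abs_mainPair_snd_sub_le (k : ℕ) :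
    |(mainPair g t (k + 2)).2 - (mainPair g t (k + 1)).2| ≤
      |(mainPair g t (k + 1)).2 - (mainPair g t k).2| := by
  have hsign : mainSign g t (k + 2) = mainSign g t k := by
    rw [mainSign_succ, mainSign_succ, neg_neg]
  have hback : mainSign g t k * (mainPair g t (k + 2)).2 ≤ mainSign g t k * (mainPair g t k).2 := by
    rw [← apply_mainPair_fst hg ht (k + 2)]
    exact mainSign_mul_le_mainSign_mul_mainPair_snd hg ht k _
      ⟨monotone_mainPair_fst hg ht (by omega), (mainPair_fst_mem hg ht _).2⟩
  have hforth := mainSign_mul_mainPair_snd_le_succ hg ht (k + 1)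
  rw [hsign] at hforth
  rw [abs_sub_comm _ (mainPair g t k).2]
  exact abs_sub_le_abs_sub_of_mul_le_mul (mainSign_eq_one_or k) hforth hback

theorem mainPair_snd_eq_of_succ_eq {k : ℕ} (hk : (mainPair g t (k + 1)).2 = (mainPair g t k).2)
    {j : ℕ} (hj : k ≤ j) : (mainPair g t j).2 = (mainPair g t k).2 := by
  obtain rfl | hj := hj.eq_or_lt
  · rfl
  have hτ : (mainPair g t j).1 ∈ Icc (mainPair g t (k + 1)).1 t :=
    ⟨monotone_mainPair_fst hg ht hj, (mainPair_fst_mem hg ht j).2⟩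
  have hτ' : (mainPair g t j).1 ∈ Icc (mainPair g t k).1 t :=
    ⟨(monotone_mainPair_fst hg ht k.le_succ).trans hτ.1, hτ.2⟩
  have h1 := mainSign_mul_le_mainSign_mul_mainPair_snd hg ht (k + 1) _ hτ
  have h2 := mainSign_mul_le_mainSign_mul_mainPair_snd hg ht k _ hτ'
  rw [mainSign_succ, apply_mainPair_fst hg ht, hk] at h1
  rw [apply_mainPair_fst hg ht] at h2
  rcases mainSign_eq_one_or (g := g) (t := t) k with h | h <;> rw [h] at h1 h2 <;> linarith

theorem exists_mainPair_snd_succ_eq (hpm : PiecewiseMonotoneOn g 0 t) :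
    ∃ k, (mainPair g t (k + 1)).2 = (mainPair g t k).2 := by
  by_contra! hne
  have hstrict : StrictMono fun k => (mainPair g t k).1 := by
    refine strictMono_nat_of_lt_succ fun k => (monotone_mainPair_fst hg ht k.le_succ).lt_of_ne ?_
    intro h
    apply hne k
    rw [← apply_mainPair_fst hg ht, ← apply_mainPair_fst hg ht]
    exact (congrArg g h).symm
  obtain ⟨k, hk⟩ := hpm.exists_monotone_triple hstrict (mainPair_fst_mem hg ht)
  simp only [apply_mainPair_fst hg ht] at hk
  have h1 := mainSign_mul_mainPair_snd_le_succ hg ht k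
  have h2 := mainSign_mul_mainPair_snd_le_succ hg ht (k + 1)
  rw [mainSign_succ] at h2
  have hne0 := hne k
  have hne1 := hne (k + 1)
  rcases mainSign_eq_one_or (g := g) (t := t) (k + 1) with h | h <;> rw [h] at h1 h2 <;>
    rcases hk with hk | hk <;>
    first | exact hne0 (by linarith) | exact hne1 (by linarith)

end MainPair

theorem runningG_increments_general (T : ℝ) (g : ℝ → ℝ)
    (hg : ContinuousOn g (Icc 0 T))
    (t : ℝ) (ht : t ∈ Ioc 0 T) :
    (|runningG g t 2 - runningG g t 1| ≤ 2 * |runningG g t 1|) ∧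
    (∀ i, 2 ≤ i →
      |runningG g t (i + 1) - runningG g t i| ≤ |runningG g t i - runningG g t (i - 1)|) ∧
    (PiecewiseMonotoneOn g 0 t →
      {i : ℕ | 2 ≤ i ∧ runningG g t i ≠ runningG g t (i - 1)}.Finite) := by
  have hgt : ContinuousOn g (Icc 0 t) := hg.mono (Icc_subset_Icc_right ht.2)
  have ht0 : 0 ≤ t := ht.1.le
  refine ⟨?_, fun i hi => ?_, fun hpm => ?_⟩
  · show |(mainPair g t 1).2 - (mainPair g t 0).2| ≤ 2 * |(mainPair g t 0).2|
    linarith [abs_sub (mainPair g t 1).2 (mainPair g t 0).2, abs_mainPair_snd_le hgt ht0 1]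
  · obtain ⟨k, rfl⟩ : ∃ k, i = k + 2 := ⟨i - 2, by omega⟩
    exact abs_mainPair_snd_sub_le hgt ht0 k
  · obtain ⟨k, hk⟩ := exists_mainPair_snd_succ_eq hgt ht0 hpm
    refine (finite_Iio (k + 2)).subset fun i ⟨hi, hne⟩ => ?_
    rw [mem_Iio]
    by_contra! hki
    obtain ⟨j, rfl⟩ : ∃ j, i = j + 2 := ⟨i - 2, by omega⟩
    apply hne
    show (mainPair g t (j + 1)).2 = (mainPair g t j).2
    rw [mainPair_snd_eq_of_succ_eq hgt ht0 hk (by omega : k ≤ j + 1),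
      mainPair_snd_eq_of_succ_eq hgt ht0 hk (by omega : k ≤ j)]

/-- Monotonicity of the increments of the running main extremum values, and
finiteness of the nonzero increments for piecewise monotone inputs. -/
theorem runningG_increments (T : ℝ) (hT : 0 < T) (g : ℝ → ℝ)
    (hg : ContinuousOn g (Icc 0 T)) (hg0 : g 0 = 0)
    (t : ℝ) (ht : t ∈ Ioc 0 T) :
    (|runningG g t 2 - runningG g t 1| ≤ 2 * |runningG g t 1|) ∧
    (∀ i, 2 ≤ i →
      |runningG g t (i + 1) - runningG g t i| ≤ |runningG g t i - runningG g t (i - 1)|) ∧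
    (PiecewiseMonotoneOn g 0 t →
      {i : ℕ | 2 ≤ i ∧ runningG g t i ≠ runningG g t (i - 1)}.Finite) :=
  runningG_increments_general T g hg t ht

end
end

section
/- Let 0 = d_0 < d_1 < ⋯ < d_ℓ = L be real numbers and let (G_i)_{i≥1} be real numbers with 0 ≤ G_1 ≤ L, 2G_1 ≥ |G_2 − G_1| ≥ |G_3 − G_2| ≥ ⋯, and G_i − G_{i−1} = 0 for all but finitely many i ≥ 2. For 1 ≤ k ≤ ℓ define ξ_k = (min{G_1, d_k} − d_{k−1})^+ + Σ_{i≥2} (−1)^{i−1} (min{|G_i − G_{i−1}|, 2d_k} − 2d_{k−1})^+, where a^+ = max{a, 0}. Then |ξ_k| ≤ d_k − d_{k−1} for every k = 1, …, ℓ. -/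
/-!
Write `a = d (k - 1)`, `b = d k` and `u i = (min |G (i + 2) - G (i + 1)| (2b) - 2a)⁺`, so that
`ξ_k = t - ∑ᶠ i, (-1) ^ i * u i` with `t = (min (G 1) b - a)⁺ ∈ [0, b - a]`. The sequence `u` is
antitone, nonnegative and eventually zero, so its alternating sum lies in `[0, u 0]`, and
`u 0 ≤ 2t` because `|G 2 - G 1| ≤ 2 G 1`. Hence `ξ_k ∈ [-t, t]`.
-/

open Set

theorem Antitone.sum_range_neg_one_pow_mul_mem_Icc {E : Type*} [Ring E] [PartialOrder E]
    [IsOrderedRing E] {f : ℕ → E} (hf : Antitone f) (hf0 : 0 ≤ f) (n : ℕ) :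
    ∑ i ∈ Finset.range n, (-1) ^ i * f i ∈ Icc 0 (f 0) := by
  induction n generalizing f with
  | zero => simpa using hf0 0
  | succ n ih =>
    obtain ⟨hS0, hS1⟩ :=
      ih (f := fun i => f (i + 1)) (fun _ _ h => hf (by omega)) (fun i => hf0 (i + 1))
    rw [Finset.sum_range_succ']
    simp only [pow_succ, mul_neg_one, neg_mul, Finset.sum_neg_distrib, pow_zero, one_mul]
    exact ⟨le_neg_add_iff_le.2 (hS1.trans (hf zero_le_one)),
      add_le_of_nonpos_left (neg_nonpos.2 hS0)⟩

theorem Antitone.finsum_neg_one_pow_mul_mem_Icc {E : Type*} [Ring E] [PartialOrder E]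
    [IsOrderedRing E] {f : ℕ → E} (hf : Antitone f) (hf0 : 0 ≤ f)
    (hfin : (Function.support f).Finite) :
    ∑ᶠ i, (-1) ^ i * f i ∈ Icc 0 (f 0) := by
  obtain ⟨N, hN⟩ := hfin.exists_notMem
  have hsupp : Function.support (fun i => (-1) ^ i * f i) ⊆ Finset.range N := by
    intro i hi
    by_contra hiN
    have hfi : f i = 0 :=
      le_antisymm ((hf (not_lt.1 (by simpa using hiN))).trans_eq (by simpa using hN)) (hf0 i)
    simp [hfi] at hi
  rw [finsum_eq_sum_of_support_subset _ hsupp]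
  exact hf.sum_range_neg_one_pow_mul_mem_Icc hf0 N

theorem max_min_sub_zero_le_two_mul {a b c g : ℝ} (h : c ≤ 2 * g) :
    max (min c (2 * b) - 2 * a) 0 ≤ 2 * max (min g b - a) 0 := by
  have hmin : min c (2 * b) ≤ 2 * min g b := by
    rw [mul_min_of_nonneg _ _ zero_le_two]
    exact min_le_min_right _ h
  exact max_le (by linarith [le_max_left (min g b - a) 0]) (by positivity)

theorem xi_bounded_general (ℓ : ℕ) (d : ℕ → ℝ)
    (hd0 : d 0 = 0) (hdmono : ∀ k < ℓ, d k < d (k + 1))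
    (G : ℕ → ℝ)
    (h2 : |G 2 - G 1| ≤ 2 * G 1)
    (hdec : ∀ i, 2 ≤ i → |G (i + 1) - G i| ≤ |G i - G (i - 1)|)
    (hfin : {i : ℕ | 2 ≤ i ∧ G i ≠ G (i - 1)}.Finite)
    (k : ℕ) (hkℓ : k ≤ ℓ) :
    |max (min (G 1) (d k) - d (k - 1)) 0 +
        ∑ᶠ i : ℕ, (-1 : ℝ) ^ (i + 1) *
          max (min |G (i + 2) - G (i + 1)| (2 * d k) - 2 * d (k - 1)) 0|
      ≤ d k - d (k - 1) := by
  have hd : MonotoneOn d (Iic ℓ) := monotoneOn_of_le_succ ordConnected_Iic fun n _ _ hn => by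
    rw [Order.succ_eq_add_one] at hn ⊢
    exact (hdmono n hn).le
  have ha : 0 ≤ d (k - 1) := hd0 ▸ hd (mem_Iic.2 ℓ.zero_le) (mem_Iic.2 (by omega)) (Nat.zero_le _)
  have hab : d (k - 1) ≤ d k := hd (mem_Iic.2 (by omega)) (mem_Iic.2 hkℓ) (Nat.sub_le k 1)
  set u : ℕ → ℝ := fun i => max (min |G (i + 2) - G (i + 1)| (2 * d k) - 2 * d (k - 1)) 0
  have hu : Antitone u := antitone_nat_of_succ_le fun i => by
    have := hdec (i + 2) le_add_self
    simp only [u]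
    gcongr max (min ?_ _ - _) _
    simpa [add_assoc] using this
  have hu_supp : (Function.support u).Finite :=
    (hfin.preimage (add_left_injective 2).injOn).subset fun i hi => ⟨le_add_self, fun hG => hi (by
      simp only [Nat.add_one_sub_one] at hG
      simp [u, hG, ha])⟩
  obtain ⟨hS0, hS1⟩ := hu.finsum_neg_one_pow_mul_mem_Icc (fun i => le_max_right _ _) hu_supp
  set t := max (min (G 1) (d k) - d (k - 1)) 0
  have ht0 : 0 ≤ t := le_max_right _ _
  have ht : t ≤ d k - d (k - 1) := max_le (by linarith [min_le_right (G 1) (d k)]) (by linarith)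
  have hu0 : u 0 ≤ 2 * t := max_min_sub_zero_le_two_mul h2
  simp only [pow_succ, mul_neg_one, neg_mul, finsum_neg_distrib]
  exact abs_le.2 ⟨by linarith, by linarith⟩

/-- The coefficients `ξ_k` built from the running main extremum values satisfy
`|ξ_k| ≤ d_k - d_{k-1}`. -/
theorem xi_bounded (ℓ : ℕ) (hℓ : 1 ≤ ℓ) (L : ℝ) (d : ℕ → ℝ)
    (hd0 : d 0 = 0) (hdL : d ℓ = L) (hdmono : ∀ k < ℓ, d k < d (k + 1))
    (G : ℕ → ℝ) (hG1 : 0 ≤ G 1) (hGL : G 1 ≤ L)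
    (h2 : |G 2 - G 1| ≤ 2 * G 1)
    (hdec : ∀ i, 2 ≤ i → |G (i + 1) - G i| ≤ |G i - G (i - 1)|)
    (hfin : {i : ℕ | 2 ≤ i ∧ G i ≠ G (i - 1)}.Finite)
    (k : ℕ) (hk1 : 1 ≤ k) (hkℓ : k ≤ ℓ) :
    |max (min (G 1) (d k) - d (k - 1)) 0 +
        ∑ᶠ i : ℕ, (-1 : ℝ) ^ (i + 1) *
          max (min |G (i + 2) - G (i + 1)| (2 * d k) - 2 * d (k - 1)) 0|
      ≤ d k - d (k - 1) :=
  xi_bounded_general ℓ d hd0 hdmono G h2 hdec hfin k hkℓ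
end

section
/- Rate-independence of the multidimensional stop (Moreau sweeping) process: let V be a finite-dimensional real inner product space, Z ⊆ V closed convex with 0 ∈ Z, f_0 ∈ V, and let u : [0,T] → V be an absolutely continuous solution of the multidimensional stop inclusion with absolutely continuous input g : [0,T] → ℝ, g(0) = 0. If τ : [0,T'] → [0,T] is nondecreasing, absolutely continuous, with τ(0) = 0 and τ(T') = T, then u ∘ τ is absolutely continuous and is a solution of the multidimensional stop inclusion with input g ∘ τ: (u∘τ)(0) = 0, (u∘τ)(s) ∈ Z for all s, and −(u∘τ)'(s) + f_0 (g∘τ)'(s) ∈ N_Z(u(τ(s))) for a.e. s ∈ [0,T']. -/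
open MeasureTheory Set

noncomputable section

/-- Outward normal cone to a convex set `Z` at `z`. -/
def normalCone {V : Type*} [NormedAddCommGroup V] [InnerProductSpace ℝ V]
    (Z : Set V) (z : V) : Set V :=
  {y | ∀ z' ∈ Z, 0 ≤ (inner ℝ y (z - z') : ℝ)}

/-- `u` is absolutely continuous on `[0,T]` with a.e. derivative `u'`
(encoded via the integral representation). -/
def IsACOn {W : Type*} [NormedAddCommGroup W] [NormedSpace ℝ W]
    (T : ℝ) (u u' : ℝ → W) : Prop :=
  IntervalIntegrable u' volume 0 T ∧
    ∀ t ∈ Icc (0 : ℝ) T, u t = u 0 + ∫ s in (0:ℝ)..t, u' s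

/-- Solution of the multidimensional stop inclusion on `[0,T]` with
characteristic convex set `Z`, direction `f0`, and an input whose a.e.
derivative is `g'`. -/
def IsStopSol {V : Type*} [NormedAddCommGroup V] [InnerProductSpace ℝ V]
    (Z : Set V) (f0 : V) (T : ℝ) (g' : ℝ → ℝ) (u u' : ℝ → V) : Prop :=
  IsACOn T u u' ∧ u 0 = 0 ∧ (∀ t ∈ Icc (0 : ℝ) T, u t ∈ Z) ∧
    ∀ᵐ t ∂(volume.restrict (Icc (0 : ℝ) T)),
      -u' t + g' t • f0 ∈ normalCone Z (u t)

/-- A face of a polytope `Z`: `Z` itself or the intersection of `Z` with a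
supporting hyperplane. -/
def IsPolyFace {V : Type*} [NormedAddCommGroup V] [InnerProductSpace ℝ V]
    (Z F : Set V) : Prop :=
  F = Z ∨ ∃ (n : V) (cc : ℝ), (∀ x ∈ Z, (inner ℝ n x : ℝ) ≤ cc) ∧
    F = {x ∈ Z | (inner ℝ n x : ℝ) = cc}

/-! A nondecreasing absolutely continuous `τ` has `τ' ≥ 0` a.e., and `τ` pushes the measure
`τ' s ds` on `(0, L]` forward to Lebesgue measure on `(τ 0, τ L]`: both give `(-∞, d]` the mass of
the interval `(τ 0, τ c]`, where `c` is the last time with `τ c ≤ d`. This gives the change of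
variables `∫₀ˢ τ' • u' ∘ τ = ∫_{τ 0}^{τ s} u'`, so `u ∘ τ` is absolutely continuous with
derivative `τ' • u' ∘ τ`, and it shows that a property holding at a.e. time `t` holds at `τ s` for
a.e. `s` with `τ' s > 0`. At such `s` the inclusion for `u` at `τ s`, scaled by `τ' s ≥ 0`, is the
inclusion for `u ∘ τ`; where `τ' s = 0` the new inclusion just says that `0` lies in the normal
cone. -/

open Filter
open scoped ENNReal

theorem MonotoneOn.exists_Ioc_inter_preimage_Iic {f : ℝ → ℝ} {a b : ℝ} (hab : a ≤ b)
    (hc : ContinuousOn f (Icc a b)) (hm : MonotoneOn f (Icc a b)) (d : ℝ) :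
    ∃ c ∈ Icc a b,
      Ioc a b ∩ f ⁻¹' Iic d = Ioc a c ∧ Ioc (f a) (f b) ∩ Iic d = Ioc (f a) (f c) := by
  rcases lt_or_ge d (f a) with hda | hda
  · refine ⟨a, left_mem_Icc.2 hab, ?_, ?_⟩
    · rw [Ioc_self]
      refine eq_empty_of_forall_notMem fun x hx => hda.not_ge ?_
      exact (hm (left_mem_Icc.2 hab) (Ioc_subset_Icc_self hx.1) hx.1.1.le).trans hx.2
    · rw [Ioc_self]
      exact eq_empty_of_forall_notMem fun y hy => hda.not_ge (hy.1.1.le.trans hy.2)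
  have hS : IsCompact (Icc a b ∩ f ⁻¹' Iic d) :=
    isCompact_Icc.of_isClosed_subset
      (hc.preimage_isClosed_of_isClosed isClosed_Icc isClosed_Iic) inter_subset_left
  obtain ⟨c, ⟨hcI, hcd⟩, hcmax⟩ := hS.exists_isGreatest ⟨a, left_mem_Icc.2 hab, hda⟩
  have hcb : Icc c b ⊆ Icc a b := Icc_subset_Icc_left hcI.1
  -- The value `min d (f b)` is attained on `[c, b]` (IVT), at a point of the set, hence at `c`.
  have hfc : f c = min d (f b) := by
    obtain ⟨x, hx, hfx⟩ := intermediate_value_Icc hcI.2 (hc.mono hcb)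
      ⟨le_min hcd (hm hcI (right_mem_Icc.2 hab) hcI.2), min_le_right _ _⟩
    have hxc : x ≤ c := hcmax ⟨hcb hx, (hfx.trans_le (min_le_left _ _) : f x ≤ d)⟩
    rw [← hfx, le_antisymm hxc hx.1]
  refine ⟨c, hcI, ?_, by rw [Ioc_inter_Iic, hfc, min_comm]⟩
  ext x
  refine ⟨fun hx => ⟨hx.1.1, hcmax ⟨Ioc_subset_Icc_self hx.1, hx.2⟩⟩, fun hx => ?_⟩
  have hxI : x ∈ Icc a b := ⟨hx.1.le, hx.2.trans hcI.2⟩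
  exact ⟨⟨hx.1, hxI.2⟩, (hm hxI hcI hx.2).trans hcd⟩

section

variable {E : Type*} [NormedAddCommGroup E] [NormedSpace ℝ E]

namespace IsACOn

variable {L : ℝ}

theorem mono {s : ℝ} {f f' : ℝ → E} (hf : IsACOn L f f') (hs : s ∈ Icc 0 L) :
    IsACOn s f f' :=
  ⟨hf.1.mono_set (uIcc_subset_uIcc left_mem_uIcc (Icc_subset_uIcc hs)),
    fun t ht => hf.2 t ⟨ht.1, ht.2.trans hs.2⟩⟩

theorem continuousOn {f f' : ℝ → E} (hf : IsACOn L f f') (hL : 0 ≤ L) :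
    ContinuousOn f (Icc 0 L) := by
  have hprim : ContinuousOn (fun t => ∫ s in (0 : ℝ)..t, f' s) (Icc 0 L) := by
    simpa [uIcc_of_le hL] using
      intervalIntegral.continuousOn_primitive_interval' hf.1 left_mem_uIcc
  exact (continuousOn_const.add hprim).congr hf.2

variable {τ τ' : ℝ → ℝ}

theorem ae_deriv_nonneg_of_monotoneOn (hτ : IsACOn L τ τ') (hm : MonotoneOn τ (Icc 0 L)) :
    ∀ᵐ x ∂volume.restrict (Ioc 0 L), 0 ≤ τ' x := by
  have hprim : MonotoneOn (fun t => ∫ s in (0 : ℝ)..t, τ' s) (Icc 0 L) := by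
    refine (hm.add_const (-τ 0)).congr fun t ht => ?_
    simp [hτ.2 t ht]
  rw [← Measure.restrict_congr_set Ioo_ae_eq_Ioc, ae_restrict_iff' measurableSet_Ioo]
  filter_upwards [hτ.1.ae_hasDerivAt_integral] with x hderiv hx
  have hacc : AccPt x (𝓟 (Icc 0 L)) := by
    simpa using (PerfectSpace.univ_preperfect x (mem_univ x)).nhds_inter
      (Icc_mem_nhds hx.1 hx.2)
  exact (hderiv (Icc_subset_uIcc (Ioo_subset_Icc_self hx)) 0 left_mem_uIcc).hasDerivWithinAt
    |>.nonneg_of_monotoneOn hacc hprim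

theorem lintegral_ofReal_deriv_Ioc (hτ : IsACOn L τ τ') (hm : MonotoneOn τ (Icc 0 L)) {x : ℝ}
    (hx : x ∈ Icc 0 L) :
    ∫⁻ t in Ioc 0 x, ENNReal.ofReal (τ' t) = ENNReal.ofReal (τ x - τ 0) := by
  have hτx := hτ.mono hx
  rw [← ofReal_integral_eq_lintegral_ofReal hτx.1.1
      (hτx.ae_deriv_nonneg_of_monotoneOn (hm.mono (Icc_subset_Icc_right hx.2))),
    ← intervalIntegral.integral_of_le hx.1, hτ.2 x hx, add_sub_cancel_left]

theorem aemeasurable_withDensity (hτ : IsACOn L τ τ') (hL : 0 ≤ L) :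
    AEMeasurable τ ((volume.restrict (Ioc 0 L)).withDensity fun t => ENNReal.ofReal (τ' t)) :=
  ((hτ.continuousOn hL).mono Ioc_subset_Icc_self).aemeasurable measurableSet_Ioc
    |>.mono_ac (withDensity_absolutelyContinuous _ _)

theorem map_withDensity (hτ : IsACOn L τ τ') (hm : MonotoneOn τ (Icc 0 L)) (hL : 0 ≤ L) :
    ((volume.restrict (Ioc 0 L)).withDensity fun t => ENNReal.ofReal (τ' t)).map τ =
      volume.restrict (Ioc (τ 0) (τ L)) := by
  refine (Measure.ext_of_Iic _ _ fun d => ?_).symm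
  obtain ⟨c, hc, hpre, himg⟩ := hm.exists_Ioc_inter_preimage_Iic hL (hτ.continuousOn hL) d
  rw [Measure.restrict_apply measurableSet_Iic, inter_comm, himg, Real.volume_Ioc,
    Measure.map_apply_of_aemeasurable (hτ.aemeasurable_withDensity hL) measurableSet_Iic,
    withDensity_apply', Measure.restrict_restrict' measurableSet_Ioc, inter_comm, hpre,
    hτ.lintegral_ofReal_deriv_Ioc hm hc]

theorem ae_comp_of_deriv_pos (hτ : IsACOn L τ τ') (hm : MonotoneOn τ (Icc 0 L)) (hL : 0 ≤ L)
    {p : ℝ → Prop} (hp : ∀ᵐ t ∂volume.restrict (Ioc (τ 0) (τ L)), p t) :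
    ∀ᵐ x ∂volume.restrict (Ioc 0 L), 0 < τ' x → p (τ x) := by
  rw [← hτ.map_withDensity hm hL] at hp
  have hpull := ae_of_ae_map (hτ.aemeasurable_withDensity hL) hp
  rw [ae_withDensity_iff' hτ.1.1.aemeasurable.ennreal_ofReal] at hpull
  filter_upwards [hpull] with x hx hpos using hx (ENNReal.ofReal_pos.2 hpos).ne'

theorem toReal_ofReal_deriv_ae_eq (hτ : IsACOn L τ τ') (hm : MonotoneOn τ (Icc 0 L)) :
    (fun x => (ENNReal.ofReal (τ' x)).toReal) =ᵐ[volume.restrict (Ioc 0 L)] τ' := by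
  filter_upwards [hτ.ae_deriv_nonneg_of_monotoneOn hm] with x hx using ENNReal.toReal_ofReal hx

theorem integrableOn_smul_comp (hτ : IsACOn L τ τ') (hm : MonotoneOn τ (Icc 0 L)) (hL : 0 ≤ L)
    {G : ℝ → E} (hG : IntegrableOn G (Ioc (τ 0) (τ L))) :
    IntegrableOn (fun x => τ' x • G (τ x)) (Ioc 0 L) := by
  rw [IntegrableOn, ← hτ.map_withDensity hm hL] at hG
  have hGτ :=
    (integrable_map_measure hG.aestronglyMeasurable (hτ.aemeasurable_withDensity hL)).1 hG
  rw [integrable_withDensity_iff_integrable_smul₀' hτ.1.1.aemeasurable.ennreal_ofReal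
    (ae_of_all _ fun _ => ENNReal.ofReal_lt_top)] at hGτ
  refine hGτ.congr ?_
  filter_upwards [hτ.toReal_ofReal_deriv_ae_eq hm] with x hx
  simp only [hx, Function.comp_apply]

theorem setIntegral_smul_comp (hτ : IsACOn L τ τ') (hm : MonotoneOn τ (Icc 0 L)) (hL : 0 ≤ L)
    {G : ℝ → E} (hG : AEStronglyMeasurable G (volume.restrict (Ioc (τ 0) (τ L)))) :
    ∫ x in Ioc 0 L, τ' x • G (τ x) = ∫ t in Ioc (τ 0) (τ L), G t := by
  rw [← hτ.map_withDensity hm hL] at hG ⊢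
  rw [integral_map (hτ.aemeasurable_withDensity hL) hG,
    integral_withDensity_eq_integral_toReal_smul₀ hτ.1.1.aemeasurable.ennreal_ofReal
      (ae_of_all _ fun _ => ENNReal.ofReal_lt_top)]
  refine integral_congr_ae ?_
  filter_upwards [hτ.toReal_ofReal_deriv_ae_eq hm] with x hx
  rw [hx]

end IsACOn

theorem IsACOn.comp {T L : ℝ} {u u' : ℝ → E} {τ τ' : ℝ → ℝ} (hu : IsACOn T u u')
    (hτ : IsACOn L τ τ') (hm : MonotoneOn τ (Icc 0 L)) (hL : 0 ≤ L) (hτ0 : τ 0 = 0)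
    (hτL : τ L ≤ T) : IsACOn L (u ∘ τ) (fun s => τ' s • u' (τ s)) := by
  have hrange : Ioc (τ 0) (τ L) ⊆ Ioc 0 T := by
    rw [hτ0]
    exact Ioc_subset_Ioc_right hτL
  refine ⟨(intervalIntegrable_iff_integrableOn_Ioc_of_le hL).2
    (hτ.integrableOn_smul_comp hm hL (hu.1.1.mono_set hrange)), fun s hs => ?_⟩
  have hτs : τ s ∈ Icc 0 T := ⟨hτ0 ▸ (hm.mapsTo_Icc hs).1, (hm.mapsTo_Icc hs).2.trans hτL⟩
  have hsub : Ioc (τ 0) (τ s) ⊆ Ioc 0 T :=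
    hrange.trans' (Ioc_subset_Ioc_right (hm.mapsTo_Icc hs).2)
  have hchange := (hτ.mono hs).setIntegral_smul_comp (hm.mono (Icc_subset_Icc_right hs.2)) hs.1
    (hu.1.1.mono_set hsub).aestronglyMeasurable
  rw [Function.comp_apply, Function.comp_apply, hτ0, hu.2 _ hτs,
    intervalIntegral.integral_of_le hτs.1, intervalIntegral.integral_of_le hs.1, hchange, hτ0]

end

section normalCone

variable {V : Type*} [NormedAddCommGroup V] [InnerProductSpace ℝ V] {Z : Set V} {z y : V}

theorem zero_mem_normalCone : (0 : V) ∈ normalCone Z z := fun z' _ => by simp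

theorem smul_mem_normalCone {c : ℝ} (hc : 0 ≤ c) (hy : y ∈ normalCone Z z) :
    c • y ∈ normalCone Z z := fun z' hz' => by
  rw [real_inner_smul_left]
  exact mul_nonneg hc (hy z' hz')

end normalCone

theorem stop_rate_independent_general
    {V : Type*} [NormedAddCommGroup V] [InnerProductSpace ℝ V]
    (Z : Set V) (f0 : V) (T : ℝ) (g' : ℝ → ℝ) (u u' : ℝ → V) (hu : IsStopSol Z f0 T g' u u')
    (T' : ℝ) (hT' : 0 < T') (τ τ' : ℝ → ℝ) (hτ : IsACOn T' τ τ')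
    (hτm : MonotoneOn τ (Icc 0 T')) (hτ0 : τ 0 = 0) (hτT : τ T' = T) :
    IsStopSol Z f0 T' (fun s => g' (τ s) * τ' s) (u ∘ τ)
      (fun s => τ' s • u' (τ s)) := by
  obtain ⟨hu_ac, hu0, huZ, hu_incl⟩ := hu
  have hmaps : MapsTo τ (Icc 0 T') (Icc 0 T) := by
    simpa only [hτ0, hτT] using hτm.mapsTo_Icc
  have hincl : ∀ᵐ t ∂volume.restrict (Ioc (τ 0) (τ T')),
      -u' t + g' t • f0 ∈ normalCone Z (u t) := by
    rw [hτ0, hτT]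
    exact ae_restrict_of_ae_restrict_of_subset Ioc_subset_Icc_self hu_incl
  refine ⟨hu_ac.comp hτ hτm hT'.le hτ0 hτT.le, by simp [hτ0, hu0],
    fun s hs => huZ _ (hmaps hs), ?_⟩
  rw [← Measure.restrict_congr_set Ioc_ae_eq_Icc]
  filter_upwards [hτ.ae_comp_of_deriv_pos hτm hT'.le hincl,
    hτ.ae_deriv_nonneg_of_monotoneOn hτm] with s hs hs0
  rw [Function.comp_apply, show -(τ' s • u' (τ s)) + (g' (τ s) * τ' s) • f0 =
    τ' s • (-u' (τ s) + g' (τ s) • f0) by module]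
  rcases hs0.eq_or_lt with h | h
  · rw [← h, zero_smul]
    exact zero_mem_normalCone
  · exact smul_mem_normalCone h.le (hs h)

/-- Rate-independence of the multidimensional stop (Moreau sweeping) process:
composing a solution with a nondecreasing absolutely continuous time
transformation yields a solution for the correspondingly transformed input. -/
theorem stop_rate_independent
    {V : Type*} [NormedAddCommGroup V] [InnerProductSpace ℝ V] [FiniteDimensional ℝ V]
    (Z : Set V) (hZcl : IsClosed Z) (hZconv : Convex ℝ Z) (h0Z : (0 : V) ∈ Z)
    (f0 : V) (T : ℝ) (hT : 0 < T)
    (g g' : ℝ → ℝ) (hg : IsACOn T g g') (hg0 : g 0 = 0)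
    (u u' : ℝ → V) (hu : IsStopSol Z f0 T g' u u')
    (T' : ℝ) (hT' : 0 < T') (τ τ' : ℝ → ℝ) (hτ : IsACOn T' τ τ')
    (hτm : MonotoneOn τ (Icc 0 T')) (hτ0 : τ 0 = 0) (hτT : τ T' = T) :
    IsStopSol Z f0 T' (fun s => g' (τ s) * τ' s) (u ∘ τ)
      (fun s => τ' s • u' (τ s)) :=
  stop_rate_independent_general Z f0 T g' u u' hu T' hT' τ τ' hτ hτm hτ0 hτT

end
end

section
/- Normal cone under rescaling by a positive operator: let E be a finite-dimensional real inner product space, A : E → E a self-adjoint positive definite linear operator with positive square root A^{1/2}, and C ⊆ E a closed convex set. Then for all e, p ∈ E with A e ∈ C: p ∈ N_C(A e) if and only if A^{1/2} p ∈ N_{A^{−1/2}C}(A^{1/2} e), where A^{−1/2}C = {A^{−1/2}z : z ∈ C}. -/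
open MeasureTheory Set

noncomputable section

/-! The substitution `z' = Binv z` matches the two cones' defining inequalities term by term:
`⟪B p, B e - Binv z⟫ = ⟪p, B (B e) - z⟫ = ⟪p, A e - z⟫`, by symmetry of `B` and `B ∘ Binv = id`. -/

theorem mem_normalCone_image_iff_of_adjoint {V W : Type*}
    [NormedAddCommGroup V] [InnerProductSpace ℝ V] [NormedAddCommGroup W] [InnerProductSpace ℝ W]
    (S : V →ₗ[ℝ] W) (S' : W →ₗ[ℝ] V) (hadj : ∀ x y, inner ℝ (S x) y = inner ℝ x (S' y))
    (L : V → W) (hL : Function.LeftInverse S' L) (Z : Set V) (w : W) (p : V) :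
    S p ∈ normalCone (L '' Z) w ↔ p ∈ normalCone Z (S' w) := by
  have key : ∀ z, inner ℝ (S p) (w - L z) = inner ℝ p (S' w - z) := fun z => by
    rw [hadj, map_sub, hL]
  simp only [normalCone, mem_ofPred_eq, forall_mem_image, key]

theorem normalCone_rescaling_general
    {E : Type*} [NormedAddCommGroup E] [InnerProductSpace ℝ E]
    (C : Set E)
    (A B Binv : E →ₗ[ℝ] E)
    (hBsa : ∀ x y : E, (inner ℝ (B x) y : ℝ) = (inner ℝ x (B y) : ℝ))
    (hBB : B.comp B = A)
    (hBi2 : B.comp Binv = LinearMap.id)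
    (e p : E) :
    p ∈ normalCone C (A e) ↔ B p ∈ normalCone (Binv '' C) (B e) := by
  have hBe : B (B e) = A e := LinearMap.congr_fun hBB e
  rw [← hBe]
  exact (mem_normalCone_image_iff_of_adjoint B B hBsa Binv
    (LinearMap.congr_fun hBi2) C (B e) p).symm

/-- Behaviour of the normal cone under rescaling by a positive self-adjoint
operator `A` with positive square root `B = A^{1/2}` (with inverse `Binv`):
`p ∈ N_C(Ae)` iff `A^{1/2}p ∈ N_{A^{-1/2}C}(A^{1/2}e)`. -/
theorem normalCone_rescaling
    {E : Type*} [NormedAddCommGroup E] [InnerProductSpace ℝ E] [FiniteDimensional ℝ E]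
    (C : Set E) (hCcl : IsClosed C) (hCconv : Convex ℝ C)
    (A B Binv : E →ₗ[ℝ] E)
    (hAsa : ∀ x y : E, (inner ℝ (A x) y : ℝ) = (inner ℝ x (A y) : ℝ))
    (hApos : ∀ x : E, x ≠ 0 → 0 < (inner ℝ (A x) x : ℝ))
    (hBsa : ∀ x y : E, (inner ℝ (B x) y : ℝ) = (inner ℝ x (B y) : ℝ))
    (hBpos : ∀ x : E, x ≠ 0 → 0 < (inner ℝ (B x) x : ℝ))
    (hBB : B.comp B = A)
    (hBi1 : Binv.comp B = LinearMap.id) (hBi2 : B.comp Binv = LinearMap.id)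
    (e p : E) (he : A e ∈ C) :
    p ∈ normalCone C (A e) ↔ B p ∈ normalCone (Binv '' C) (B e) :=
  normalCone_rescaling_general C A B Binv hBsa hBB hBi2 e p

end
end

section
/- Reduction of the Moreau system to a sweeping process: let E be a finite-dimensional real inner product space, V ⊆ E a linear subspace with orthogonal complement U = V^⊥, Π ⊆ E a closed convex set, f_0 ∈ V, and g : [0,T] → ℝ absolutely continuous. Suppose ξ, s : [0,T] → E are absolutely continuous, ξ(t) ∈ U for all t, s(t) ∈ (Π ∩ V) − f_0 g(t) for all t, and ξ'(t) − s'(t) ∈ N_{Π − f_0 g(t)}(s(t)) for a.e. t. Then −s'(t) ∈ N_{(Π ∩ V) − f_0 g(t)}(s(t)) for a.e. t. -/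
open MeasureTheory Set

noncomputable section

/-!
Since `ξ` stays in the closed subspace `U = Vᗮ`, so do its difference quotients; hence
`ξ' ∈ U` wherever the Lebesgue differentiation theorem makes `ξ'` the derivative of `ξ`,
i.e. a.e. For competitors `z'` in the smaller set `(Π ∩ V) - f₀ g(t)` the displacement
`s(t) - z'` lies in `V`, so it is orthogonal to `ξ'(t)`: subtracting `ξ'(t)` from
`ξ'(t) - s'(t)` keeps the normal-cone inequalities, which pass to the smaller set.
-/

section AbsolutelyContinuous

variable {F : Type*} [NormedAddCommGroup F] [NormedSpace ℝ F]

theorem HasDerivAt.mem_of_mapsTo_Ico {K : Submodule ℝ F} (hK : IsClosed (K : Set F))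
    {u : ℝ → F} {u' : F} {x b : ℝ} (hu : HasDerivAt u u' x) (hxb : x < b)
    (huK : MapsTo u (Ico x b) K) : u' ∈ K := by
  refine hK.mem_of_tendsto (hasDerivAt_iff_tendsto_slope_left_right.mp hu).2 ?_
  filter_upwards [Ioo_mem_nhdsGT hxb] with y hy
  exact K.smul_mem _ (K.sub_mem (huK ⟨hy.1.le, hy.2⟩) (huK ⟨le_rfl, hxb⟩))

theorem IsACOn.ae_mem_of_mapsTo [CompleteSpace F] {K : Submodule ℝ F}
    (hK : IsClosed (K : Set F)) {T : ℝ} {u u' : ℝ → F} (hu : IsACOn T u u')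
    (huK : MapsTo u (Icc 0 T) K) :
    ∀ᵐ t ∂(volume.restrict (Icc (0 : ℝ) T)), u' t ∈ K := by
  have hne : ∀ᵐ t ∂(volume : Measure ℝ), t ≠ T := by
    simp [ae_iff, measure_singleton]
  rw [ae_restrict_iff' measurableSet_Icc]
  filter_upwards [hu.1.ae_hasDerivAt_integral, hne] with t hderiv htT ht
  refine ((hderiv (Icc_subset_uIcc ht) 0 left_mem_uIcc).const_add (u 0)).mem_of_mapsTo_Ico
    hK (ht.2.lt_of_ne htT) fun y hy => ?_
  have hy : y ∈ Icc 0 T := ⟨ht.1.trans hy.1, hy.2.le⟩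
  simpa only [hu.2 y hy] using huK hy

end AbsolutelyContinuous

section NormalCone

variable {E : Type*} [NormedAddCommGroup E] [InnerProductSpace ℝ E]

theorem normalCone_anti {Z Z' : Set E} {z : E} (h : Z' ⊆ Z) :
    normalCone Z z ⊆ normalCone Z' z :=
  fun _ hy z' hz' => hy z' (h hz')

theorem sub_mem_normalCone_of_mem_orthogonal {V : Submodule ℝ E} {Z : Set E} {z y w : E}
    (hy : y ∈ normalCone Z z) (hw : w ∈ Vᗮ) (hZ : ∀ z' ∈ Z, z - z' ∈ V) :
    y - w ∈ normalCone Z z := fun z' hz' => by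
  rw [inner_sub_left, Submodule.inner_left_of_mem_orthogonal (hZ z' hz') hw, sub_zero]
  exact hy z' hz'

theorem sub_mem_of_mem_image_sub_right {V : Submodule ℝ E} {A : Set E} (hA : A ⊆ V) {c z z' : E}
    (hz : z ∈ (fun x => x - c) '' A) (hz' : z' ∈ (fun x => x - c) '' A) : z - z' ∈ V := by
  obtain ⟨p, hp, rfl⟩ := hz
  obtain ⟨p', hp', rfl⟩ := hz'
  rw [sub_sub_sub_cancel_right]
  exact V.sub_mem (hA hp) (hA hp')

end NormalCone

theorem moreau_reduction_to_sweeping_general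
    {E : Type*} [NormedAddCommGroup E] [InnerProductSpace ℝ E] [FiniteDimensional ℝ E]
    (Vs : Submodule ℝ E) (Pi0 : Set E)
    (f0 : E)
    (T : ℝ) (g : ℝ → ℝ)
    (ξ ξ' s s' : ℝ → E) (hξ : IsACOn T ξ ξ')
    (hξU : ∀ t ∈ Icc (0 : ℝ) T, ξ t ∈ Vsᗮ)
    (hsZ : ∀ t ∈ Icc (0 : ℝ) T,
      s t ∈ (fun x => x - g t • f0) '' (Pi0 ∩ ↑Vs))
    (hincl : ∀ᵐ t ∂(volume.restrict (Icc (0 : ℝ) T)),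
      ξ' t - s' t ∈ normalCone ((fun x => x - g t • f0) '' Pi0) (s t)) :
    ∀ᵐ t ∂(volume.restrict (Icc (0 : ℝ) T)),
      -s' t ∈ normalCone ((fun x => x - g t • f0) '' (Pi0 ∩ ↑Vs)) (s t) := by
  filter_upwards [hincl, hξ.ae_mem_of_mapsTo Vs.isClosed_orthogonal hξU,
    ae_restrict_mem measurableSet_Icc] with t hN hξ't ht
  have hNV := sub_mem_normalCone_of_mem_orthogonal
    (normalCone_anti (image_mono inter_subset_left) hN) hξ't
    fun z' hz' => sub_mem_of_mem_image_sub_right inter_subset_right (hsZ t ht) hz'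
  rwa [sub_sub_cancel_left] at hNV

/-- Reduction of the Moreau system to a sweeping process: if `ξ(t) ∈ U = V^⊥`,
`s(t) ∈ (Π ∩ V) - f₀ g(t)` and `ξ' - s' ∈ N_{Π - f₀ g(t)}(s)` a.e., then
`-s' ∈ N_{(Π ∩ V) - f₀ g(t)}(s)` a.e. -/
theorem moreau_reduction_to_sweeping
    {E : Type*} [NormedAddCommGroup E] [InnerProductSpace ℝ E] [FiniteDimensional ℝ E]
    (Vs : Submodule ℝ E) (Pi0 : Set E) (hPicl : IsClosed Pi0) (hPiconv : Convex ℝ Pi0)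
    (f0 : E) (hf0 : f0 ∈ Vs)
    (T : ℝ) (hT : 0 < T) (g g' : ℝ → ℝ) (hg : IsACOn T g g')
    (ξ ξ' s s' : ℝ → E) (hξ : IsACOn T ξ ξ') (hs : IsACOn T s s')
    (hξU : ∀ t ∈ Icc (0 : ℝ) T, ξ t ∈ Vsᗮ)
    (hsZ : ∀ t ∈ Icc (0 : ℝ) T,
      s t ∈ (fun x => x - g t • f0) '' (Pi0 ∩ ↑Vs))
    (hincl : ∀ᵐ t ∂(volume.restrict (Icc (0 : ℝ) T)),
      ξ' t - s' t ∈ normalCone ((fun x => x - g t • f0) '' Pi0) (s t)) :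
    ∀ᵐ t ∂(volume.restrict (Icc (0 : ℝ) T)),
      -s' t ∈ normalCone ((fun x => x - g t • f0) '' (Pi0 ∩ ↑Vs)) (s t) :=
  moreau_reduction_to_sweeping_general Vs Pi0 f0 T g ξ ξ' s s' hξ hξU hsZ hincl

end
end

section
/- Dynamics on a face of the polytope: let V be a finite-dimensional real inner product space, n_1, …, n_m ∈ V, c_1, …, c_m > 0, Z = ∩_{i=1}^{m}{x ∈ V : ⟨n_i, x⟩ ≤ c_i}, and f_0 ∈ V. Fix k ≤ m with n_1, …, n_k linearly independent, let E_k = {x ∈ V : ⟨n_i, x⟩ = c_i for i = 1, …, k}, and let f_k be the orthogonal projection of f_0 onto the subspace {x ∈ V : ⟨n_i, x⟩ = 0 for i = 1, …, k}. Suppose g : (t_1, t_2) → ℝ and u : (t_1, t_2) → V are absolutely continuous, −u'(t) + f_0 g'(t) ∈ N_Z(u(t)) for a.e. t ∈ (t_1, t_2), and for every t ∈ (t_1, t_2) the point u(t) lies in Z ∩ E_k and has a neighborhood within E_k contained in Z. Then u'(t) = g'(t) f_k for a.e. t ∈ (t_1, t_2). -/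
/-! At almost every time `u` is differentiable with derivative `u'`. The constraints
`⟪nᵢ, u⟫ = cᵢ` (`i < k`) hold identically, so `u'` lies in `K`; since `u` stays in the relative
interior of the face, `Z` contains a segment through `u t` in every direction of `K`, so the normal
vector `-u' + g' • f₀` is orthogonal to `K`. Hence `u' - g' • f_k = g' • (f₀ - f_k) - (-u' + g' • f₀)`
lies in `K ⊓ Kᗮ = ⊥`. -/

open MeasureTheory Set

noncomputable section

/-- `u` is absolutely continuous on the open interval `(a,b)` with a.e.
derivative `u'`. -/
def IsACOnIoo {W : Type*} [NormedAddCommGroup W] [NormedSpace ℝ W]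
    (a b : ℝ) (u u' : ℝ → W) : Prop :=
  IntervalIntegrable u' volume a b ∧
    ∀ s ∈ Ioo a b, ∀ t ∈ Ioo a b, s ≤ t → u t = u s + ∫ x in s..t, u' x

open Filter Topology

section Orthogonality

variable {V : Type*} [NormedAddCommGroup V] [InnerProductSpace ℝ V]

lemma mem_orthogonal_span_image_iff {ι : Type*} (n : ι → V) (s : Set ι) (v : V) :
    v ∈ (Submodule.span ℝ (n '' s))ᗮ ↔ ∀ i ∈ s, inner ℝ (n i) v = 0 := by
  rw [← Submodule.span_singleton_le_iff_mem, ← Submodule.isOrtho_iff_le, Submodule.isOrtho_comm,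
    Submodule.isOrtho_span]
  simp

lemma inner_eq_zero_of_mem_normalCone {Z : Set V} {z w v : V} (hw : w ∈ normalCone Z z)
    (hline : ∀ᶠ δ in 𝓝 (0 : ℝ), z + δ • v ∈ Z) : inner ℝ w v = 0 := by
  obtain ⟨ε, hε, hball⟩ := Metric.eventually_nhds_iff.mp hline
  have hsign : ∀ δ : ℝ, |δ| < ε → δ * inner ℝ w v ≤ 0 := fun δ hδ => by
    have := hw _ (hball (by simpa using hδ))
    rwa [sub_add_cancel_left, inner_neg_right, real_inner_smul_right, neg_nonneg] at this
  have hpos := hsign (ε / 2) (by rw [abs_of_pos (half_pos hε)]; linarith)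
  have hneg := hsign (-(ε / 2)) (by rw [abs_neg, abs_of_pos (half_pos hε)]; linarith)
  nlinarith

lemma eventually_add_smul_mem_of_ball_inter_subset {Z E : Set V} {z v : V} {ε : ℝ} (hε : 0 < ε)
    (hball : ∀ y ∈ E, ‖y - z‖ < ε → y ∈ Z) (hline : ∀ δ : ℝ, z + δ • v ∈ E) :
    ∀ᶠ δ in 𝓝 (0 : ℝ), z + δ • v ∈ Z := by
  have hlim : Tendsto (fun δ : ℝ => z + δ • v) (𝓝 0) (𝓝 z) :=
    (continuous_const.add (continuous_id.smul continuous_const)).tendsto' 0 z (by simp)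
  filter_upwards [hlim.eventually (Metric.ball_mem_nhds z hε)] with δ hδ
  exact hball _ (hline δ) (by simpa [dist_eq_norm] using hδ)

lemma inner_eq_zero_of_hasDerivAt_of_eventually_eq {u : ℝ → V} {v a : V} {x c : ℝ}
    (hu : HasDerivAt u v x) (hconst : ∀ᶠ y in 𝓝 x, inner ℝ a (u y) = c) : inner ℝ a v = 0 :=
  ((innerSL ℝ a).hasFDerivAt.comp_hasDerivAt x hu).unique
    ((hasDerivAt_const x c).congr_of_eventuallyEq hconst)

end Orthogonality

section AbsolutelyContinuous

variable {W : Type*} [NormedAddCommGroup W] [NormedSpace ℝ W] {a b : ℝ} {u u' : ℝ → W}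

lemma IsACOnIoo.eq_add_integral (hu : IsACOnIoo a b u u') {s t : ℝ} (hs : s ∈ Ioo a b)
    (ht : t ∈ Ioo a b) : u t = u s + ∫ y in s..t, u' y := by
  rcases le_total s t with hst | hts
  · exact hu.2 s hs t ht hst
  · rw [hu.2 t ht s hs hts, intervalIntegral.integral_symm]
    abel

lemma IsACOnIoo.ae_hasDerivAt [CompleteSpace W] (hu : IsACOnIoo a b u u') :
    ∀ᵐ x ∂(volume.restrict (Ioo a b)), HasDerivAt u (u' x) x := by
  filter_upwards [ae_restrict_of_ae hu.1.ae_hasDerivAt_integral, ae_restrict_mem measurableSet_Ioo]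
    with x hderiv hx
  have hxab : x ∈ uIcc a b := by
    rw [uIcc_of_le (hx.1.trans hx.2).le]
    exact Ioo_subset_Icc_self hx
  refine ((hderiv hxab x hxab).const_add (u x)).congr_of_eventuallyEq ?_
  filter_upwards [Ioo_mem_nhds hx.1 hx.2] with y hy
  exact hu.eq_add_integral hx hy

end AbsolutelyContinuous

theorem stop_dynamics_on_face_general
    {V : Type*} [NormedAddCommGroup V] [InnerProductSpace ℝ V] [FiniteDimensional ℝ V]
    (m : ℕ) (n : Fin m → V) (cc : Fin m → ℝ)
    (Z : Set V)
    (f0 : V) (k : ℕ)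
    (K : Submodule ℝ V)
    (hK : K = (Submodule.span ℝ (n '' {i : Fin m | (i : ℕ) < k}))ᗮ)
    (fk : V) (hfk : fk ∈ K) (hfkproj : ∀ v ∈ K, (inner ℝ (f0 - fk) v : ℝ) = 0)
    (t1 t2 : ℝ)
    (g' : ℝ → ℝ)
    (u u' : ℝ → V) (hu : IsACOnIoo t1 t2 u u')
    (hincl : ∀ᵐ t ∂(volume.restrict (Ioo t1 t2)),
      -u' t + g' t • f0 ∈ normalCone Z (u t))
    (hface : ∀ t ∈ Ioo t1 t2, u t ∈ Z ∧
      (∀ i : Fin m, (i : ℕ) < k → (inner ℝ (n i) (u t) : ℝ) = cc i) ∧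
      ∃ ε > 0, ∀ y : V, (∀ i : Fin m, (i : ℕ) < k → (inner ℝ (n i) y : ℝ) = cc i) →
        ‖y - u t‖ < ε → y ∈ Z) :
    ∀ᵐ t ∂(volume.restrict (Ioo t1 t2)), u' t = g' t • fk := by
  filter_upwards [hu.ae_hasDerivAt, ae_restrict_mem measurableSet_Ioo, hincl] with x hderiv hx hnc
  obtain ⟨-, hxface, ε, hε, hball⟩ := hface x hx
  have hu'K : u' x ∈ K := by
    rw [hK, mem_orthogonal_span_image_iff]
    intro i hi
    refine inner_eq_zero_of_hasDerivAt_of_eventually_eq (c := cc i) hderiv ?_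
    filter_upwards [Ioo_mem_nhds hx.1 hx.2] with y hy
    exact (hface y hy).2.1 i hi
  have hnormal : -u' x + g' x • f0 ∈ Kᗮ := by
    refine (Submodule.mem_orthogonal' K _).mpr fun v hv => inner_eq_zero_of_mem_normalCone hnc ?_
    rw [hK, mem_orthogonal_span_image_iff] at hv
    refine eventually_add_smul_mem_of_ball_inter_subset hε hball fun δ i hi => ?_
    rw [inner_add_right, real_inner_smul_right, hv i hi, hxface i hi, mul_zero, add_zero]
  have hdiff : u' x - g' x • fk ∈ K ⊓ Kᗮ := by
    refine ⟨K.sub_mem hu'K (K.smul_mem _ hfk), ?_⟩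
    have hf0 : f0 - fk ∈ Kᗮ := (Submodule.mem_orthogonal' K _).mpr hfkproj
    have hdecomp : u' x - g' x • fk = g' x • (f0 - fk) - (-u' x + g' x • f0) := by
      rw [smul_sub]
      abel
    exact hdecomp ▸ Kᗮ.sub_mem (Kᗮ.smul_mem (g' x) hf0) hnormal
  rw [Submodule.inf_orthogonal_eq_bot, Submodule.mem_bot, sub_eq_zero] at hdiff
  exact hdiff

/-- Dynamics of the stop inclusion on a face of the polytope: while the
solution stays in the relative interior of the face cut out by the first `k`
constraints, its velocity is `g'(t) f_k`, where `f_k` is the orthogonal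
projection of `f₀` onto the corresponding subspace. -/
theorem stop_dynamics_on_face
    {V : Type*} [NormedAddCommGroup V] [InnerProductSpace ℝ V] [FiniteDimensional ℝ V]
    (m : ℕ) (n : Fin m → V) (cc : Fin m → ℝ) (hcc : ∀ i, 0 < cc i)
    (Z : Set V) (hZ : Z = ⋂ i : Fin m, {x : V | (inner ℝ (n i) x : ℝ) ≤ cc i})
    (f0 : V) (k : ℕ) (hk : k ≤ m)
    (hlin : LinearIndependent ℝ fun i : {i : Fin m // (i : ℕ) < k} => n i.1)
    (K : Submodule ℝ V)
    (hK : K = (Submodule.span ℝ (n '' {i : Fin m | (i : ℕ) < k}))ᗮ)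
    (fk : V) (hfk : fk ∈ K) (hfkproj : ∀ v ∈ K, (inner ℝ (f0 - fk) v : ℝ) = 0)
    (t1 t2 : ℝ) (ht : t1 < t2)
    (g g' : ℝ → ℝ) (hg : IsACOnIoo t1 t2 g g')
    (u u' : ℝ → V) (hu : IsACOnIoo t1 t2 u u')
    (hincl : ∀ᵐ t ∂(volume.restrict (Ioo t1 t2)),
      -u' t + g' t • f0 ∈ normalCone Z (u t))
    (hface : ∀ t ∈ Ioo t1 t2, u t ∈ Z ∧
      (∀ i : Fin m, (i : ℕ) < k → (inner ℝ (n i) (u t) : ℝ) = cc i) ∧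
      ∃ ε > 0, ∀ y : V, (∀ i : Fin m, (i : ℕ) < k → (inner ℝ (n i) y : ℝ) = cc i) →
        ‖y - u t‖ < ε → y ∈ Z) :
    ∀ᵐ t ∂(volume.restrict (Ioo t1 t2)), u' t = g' t • fk :=
  stop_dynamics_on_face_general m n cc Z f0 k K hK fk hfk hfkproj t1 t2 g' u u' hu hincl hface

end
end

section
/- Cone condition along the loading polyline: let V be a finite-dimensional real inner product space, n_1, …, n_m ∈ V, c_1, …, c_m > 0, Z = ∩_{i=1}^{m}{x ∈ V : ⟨n_i, x⟩ ≤ c_i}, and f_0 ∈ V. Let u* : [0, L] → Z be a solution of the multidimensional stop inclusion with input g(t) = t, and suppose that for some k and some d_{k−1} < d_k the function u* is affine on [d_{k−1}, d_k] with u*(d_{k−1}) = B_{k−1}, u*(d_k) = B_k, and that for every d ∈ (d_{k−1}, d_k) the point u*(d) satisfies ⟨n_i, u*(d)⟩ = c_i for i = 1, …, k−1 and ⟨n_i, u*(d)⟩ < c_i for i = k, …, m. Then −(B_k − B_{k−1})/(d_k − d_{k−1}) + f_0 ∈ {Σ_{i=1}^{k−1} α_i n_i : α_1, …, α_{k−1}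 ≥ 0}. -/
/-
On the open link only the first `k - 1` constraints are active, so for every `w` with
`⟪nᵢ, w⟫ ≤ 0` for those `i` a short step `u*(t) + ε w` stays in `Z`, and the normal-cone inclusion
gives `⟪f₀ - u*'(t), w⟫ ≤ 0` for a.e. `t` on the link. Integrating over the link gives
`⟪f₀ - (B_k - B_{k-1}) / (d_k - d_{k-1}), w⟫ ≤ 0`, and by Farkas' lemma these inequalities
characterise the cone spanned by the active normals.

Farkas' lemma is the separation theorem for closed convex cones. A finitely generated cone is closed
by the conic Carathéodory argument: a linear dependence among the generators lets one drop a
generator from every conic combination, down to linearly independent generators, whose cone is the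
image of a closed orthant under an injective linear map.
-/

open MeasureTheory Set

noncomputable section

open Filter
open scoped RealInnerProductSpace Topology

section ConicSpan

variable {ι V : Type*} [AddCommGroup V] [Module ℝ V] {v : ι → V} {s t : Finset ι} {x : V}

variable (v s) in
def conicSpan : PointedCone ℝ V :=
  (PointedCone.positive ℝ (ι → ℝ)).map (∑ i ∈ s, (LinearMap.proj i).smulRight (v i))

lemma mem_conicSpan :
    x ∈ conicSpan v s ↔ ∃ α : ι → ℝ, (∀ i, 0 ≤ α i) ∧ x = ∑ i ∈ s, α i • v i := by
  simp [conicSpan, PointedCone.mem_map, Pi.le_def, eq_comm]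

lemma mem_conicSpan_of_mem {i : ι} (hi : i ∈ s) : v i ∈ conicSpan v s := by
  classical
  refine mem_conicSpan.2 ⟨Pi.single i 1, fun j => ?_, ?_⟩
  · by_cases h : j = i <;> simp [h]
  · simp [Pi.single_apply, hi]

lemma conicSpan_mono (h : s ⊆ t) : conicSpan v s ≤ conicSpan v t := by
  classical
  intro x hx
  obtain ⟨α, hα, rfl⟩ := mem_conicSpan.1 hx
  refine mem_conicSpan.2 ⟨fun i => if i ∈ s then α i else 0, fun i => ?_, ?_⟩
  · by_cases hi : i ∈ s <;> simp [hi, hα i]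
  · rw [← Finset.sum_subset h fun i _ hi => by simp [hi]]
    exact Finset.sum_congr rfl fun i hi => by simp [hi]

lemma conicSpan_eq_image (v : ι → V) (s : Finset ι) :
    (conicSpan v s : Set V) = Fintype.linearCombination ℝ (fun i : s => v i) '' Ici 0 := by
  classical
  ext x
  simp only [SetLike.mem_coe, mem_conicSpan, mem_image, mem_Ici, Pi.le_def,
    Fintype.linearCombination_apply]
  constructor
  · rintro ⟨α, hα, rfl⟩
    exact ⟨fun i => α i, fun i => hα i, Finset.sum_coe_sort s fun i => α i • v i⟩
  · rintro ⟨β, hβ, rfl⟩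
    refine ⟨fun i => if h : i ∈ s then β ⟨i, h⟩ else 0, fun i => ?_, ?_⟩
    · by_cases hi : i ∈ s
      · simpa [hi] using hβ ⟨i, hi⟩
      · simp [hi]
    · rw [← Finset.sum_coe_sort s]
      simp

lemma exists_add_mul_nonneg_and_eq_zero {α c : ι → ℝ} (hα : ∀ i ∈ s, 0 ≤ α i)
    (hc : ∃ i ∈ s, c i < 0) :
    ∃ τ : ℝ, ∃ i₀ ∈ s, α i₀ + τ * c i₀ = 0 ∧ ∀ i ∈ s, 0 ≤ α i + τ * c i := by
  -- the minimum ratio `α i / -c i` is the largest step keeping all coefficients nonnegative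
  obtain ⟨i₀, hi₀, hmin⟩ := (s.filter (c · < 0)).exists_min_image (fun i => α i / -c i)
    (by simpa [Finset.filter_nonempty_iff] using hc)
  obtain ⟨hi₀s, hci₀⟩ := Finset.mem_filter.1 hi₀
  have hτ : 0 ≤ α i₀ / -c i₀ := div_nonneg (hα i₀ hi₀s) (neg_nonneg.2 hci₀.le)
  refine ⟨α i₀ / -c i₀, i₀, hi₀s, ?_, fun i hi => ?_⟩
  · rw [div_neg, neg_mul, div_mul_cancel₀ _ hci₀.ne, add_neg_cancel]
  rcases lt_or_ge (c i) 0 with hci | hci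
  · have hle := hmin i (Finset.mem_filter.2 ⟨hi, hci⟩)
    rw [le_div_iff₀ (neg_pos.2 hci)] at hle
    linarith
  · exact add_nonneg (hα i hi) (mul_nonneg hτ hci)

lemma conicSpan_subset_biUnion_erase [DecidableEq ι] {c : ι → ℝ}
    (hc : ∑ i ∈ s, c i • v i = 0) (hneg : ∃ i ∈ s, c i < 0) :
    (conicSpan v s : Set V) ⊆ ⋃ i ∈ s, (conicSpan v (s.erase i) : Set V) := by
  intro x hx
  obtain ⟨α, hα, rfl⟩ := mem_conicSpan.1 hx
  obtain ⟨τ, i₀, hi₀, hzero, hnonneg⟩ := exists_add_mul_nonneg_and_eq_zero (fun i _ => hα i) hneg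
  set β : ι → ℝ := fun i => if i ∈ s then α i + τ * c i else α i with hβ
  have hβ_nonneg : ∀ i, 0 ≤ β i := fun i => by
    by_cases hi : i ∈ s <;> simp [hβ, hi, hnonneg, hα]
  refine mem_iUnion₂.2 ⟨i₀, hi₀, mem_conicSpan.2 ⟨β, hβ_nonneg, ?_⟩⟩
  calc ∑ i ∈ s, α i • v i = ∑ i ∈ s, (α i + τ * c i) • v i := by
        simp [add_smul, Finset.sum_add_distrib, mul_smul, ← Finset.smul_sum, hc]
    _ = ∑ i ∈ s, β i • v i := Finset.sum_congr rfl fun i hi => by simp [hβ, hi]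
    _ = ∑ i ∈ s.erase i₀, β i • v i := (Finset.sum_erase s (by simp [hβ, hi₀, hzero])).symm

lemma exists_sum_smul_eq_zero_of_not_linearIndepOn (h : ¬LinearIndepOn ℝ v (s : Set ι)) :
    ∃ c : ι → ℝ, ∑ i ∈ s, c i • v i = 0 ∧ ∃ i ∈ s, c i < 0 := by
  simp only [linearIndepOn_finset_iff, not_forall] at h
  obtain ⟨c, hc, i, hi, hci⟩ := h
  rcases lt_or_gt_of_ne hci with hneg | hpos
  · exact ⟨c, hc, i, hi, hneg⟩
  · exact ⟨-c, by simp [neg_smul, hc], i, hi, by simpa⟩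

end ConicSpan

section ClosedConicSpan

variable {ι V : Type*} [NormedAddCommGroup V] [NormedSpace ℝ V] {v : ι → V}

lemma isClosed_conicSpan_of_linearIndepOn {s : Finset ι} (h : LinearIndepOn ℝ v (s : Set ι)) :
    IsClosed (conicSpan v s : Set V) := by
  rw [conicSpan_eq_image]
  refine (LinearMap.isClosedEmbedding_of_injective ?_).isClosedMap _ isClosed_Ici
  exact LinearMap.ker_eq_bot.2 h.fintypeLinearCombination_injective

theorem isClosed_conicSpan [FiniteDimensional ℝ V] (s : Finset ι) :
    IsClosed (conicSpan v s : Set V) := by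
  classical
  induction s using Finset.strongInduction with
  | H s ih =>
  by_cases h : LinearIndepOn ℝ v (s : Set ι)
  · exact isClosed_conicSpan_of_linearIndepOn h
  obtain ⟨c, hc, hneg⟩ := exists_sum_smul_eq_zero_of_not_linearIndepOn h
  have hunion : (conicSpan v s : Set V) = ⋃ i ∈ s, (conicSpan v (s.erase i) : Set V) :=
    (conicSpan_subset_biUnion_erase hc hneg).antisymm
      (iUnion₂_subset fun i _ => conicSpan_mono (s.erase_subset i))
  rw [hunion]
  exact s.finite_toSet.isClosed_biUnion fun i hi => ih _ (Finset.erase_ssubset hi)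

end ClosedConicSpan

section Farkas

variable {ι V : Type*} [NormedAddCommGroup V] [InnerProductSpace ℝ V] [FiniteDimensional ℝ V]
  {v : ι → V} {s : Finset ι}

theorem mem_conicSpan_of_forall_inner_nonpos {y : V}
    (hy : ∀ w, (∀ i ∈ s, ⟪v i, w⟫ ≤ 0) → ⟪y, w⟫ ≤ 0) : y ∈ conicSpan v s := by
  by_contra hys
  obtain ⟨w, hw, hyw⟩ :=
    ProperCone.hyperplane_separation' (C := ⟨conicSpan v s, isClosed_conicSpan s⟩) hys
  have hyw' := hy (-w) fun i hi => by
    simpa [inner_neg_right] using hw _ (mem_conicSpan_of_mem hi)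
  rw [inner_neg_right] at hyw'
  linarith

end Farkas

section NormalCone

variable {V : Type*} [NormedAddCommGroup V] [InnerProductSpace ℝ V]

lemma inner_nonpos_of_mem_normalCone {Z : Set V} {z w v : V} {ε : ℝ}
    (hw : w ∈ normalCone Z z) (hε : 0 < ε) (hzv : z + ε • v ∈ Z) : ⟪w, v⟫ ≤ 0 := by
  have := hw _ hzv
  rw [sub_add_cancel_left, inner_neg_right, real_inner_smul_right] at this
  nlinarith

lemma exists_add_smul_mem_polyhedron {ι : Type*} [Finite ι] {a : ι → V} {b : ι → ℝ} {z v : V}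
    (hz : ∀ i, ⟪a i, z⟫ ≤ b i) (hv : ∀ i, ⟪a i, z⟫ = b i → ⟪a i, v⟫ ≤ 0) :
    ∃ ε : ℝ, 0 < ε ∧ z + ε • v ∈ ⋂ i, {x | ⟪a i, x⟫ ≤ b i} := by
  have h : ∀ i, ∀ᶠ ε in 𝓝[>] (0 : ℝ), ⟪a i, z⟫ + ε * ⟪a i, v⟫ ≤ b i := by
    intro i
    rcases (hz i).lt_or_eq with hlt | heq
    · have hlim : Tendsto (fun ε : ℝ => ⟪a i, z⟫ + ε * ⟪a i, v⟫) (𝓝[>] 0) (𝓝 ⟪a i, z⟫) :=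
        tendsto_nhdsWithin_of_tendsto_nhds <|
          (by fun_prop : Continuous fun ε : ℝ => ⟪a i, z⟫ + ε * ⟪a i, v⟫).tendsto' 0 _ (by simp)
      exact (hlim.eventually_lt_const hlt).mono fun _ => le_of_lt
    · filter_upwards [self_mem_nhdsWithin] with ε hε
      nlinarith [hv i heq, mem_Ioi.1 hε]
  obtain ⟨ε, hε, hmem⟩ := ((eventually_all.2 h).and self_mem_nhdsWithin).exists
  refine ⟨ε, hmem, mem_iInter.2 fun i => ?_⟩
  simpa [inner_add_right, real_inner_smul_right] using hε i

lemma inner_nonpos_of_mem_normalCone_polyhedron {ι : Type*} [Finite ι] {a : ι → V} {b : ι → ℝ}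
    {z w v : V} (hw : w ∈ normalCone (⋂ i, {x | ⟪a i, x⟫ ≤ b i}) z)
    (hz : ∀ i, ⟪a i, z⟫ ≤ b i) (hv : ∀ i, ⟪a i, z⟫ = b i → ⟪a i, v⟫ ≤ 0) : ⟪w, v⟫ ≤ 0 :=
  let ⟨_, hε, hmem⟩ := exists_add_smul_mem_polyhedron hz hv
  inner_nonpos_of_mem_normalCone hw hε hmem

end NormalCone

section Integral

variable {V : Type*} [NormedAddCommGroup V] [InnerProductSpace ℝ V] [CompleteSpace V]

lemma mul_inner_le_inner_intervalIntegral {f : ℝ → V} {a b : ℝ} {w v : V} (hab : a ≤ b)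
    (hf : IntervalIntegrable f volume a b)
    (h : ∀ᵐ t ∂volume.restrict (Ioo a b), ⟪v, w⟫ ≤ ⟪v, f t⟫) :
    (b - a) * ⟪v, w⟫ ≤ ⟪v, ∫ t in a..b, f t⟫ := by
  have hfv : IntervalIntegrable (fun t => ⟪v, f t⟫) volume a b :=
    ⟨(innerSL ℝ v).integrable_comp hf.1, (innerSL ℝ v).integrable_comp hf.2⟩
  have hmono := intervalIntegral.integral_mono_ae_restrict hab intervalIntegrable_const hfv
    (by rwa [Measure.restrict_congr_set Ioo_ae_eq_Icc] at h)
  have hcomm : ∫ t in a..b, ⟪v, f t⟫ = ⟪v, ∫ t in a..b, f t⟫ := by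
    simpa using (innerSL ℝ v).intervalIntegral_comp_comm hf
  simpa [hcomm] using hmono

end Integral

section AbsolutelyContinuous

variable {W : Type*} [NormedAddCommGroup W] [NormedSpace ℝ W] {T a b : ℝ} {u u' : ℝ → W}

lemma IsACOn.intervalIntegrable (h : IsACOn T u u') (ha : a ∈ Icc 0 T) (hb : b ∈ Icc 0 T) :
    IntervalIntegrable u' volume a b :=
  h.1.mono_set (uIcc_subset_uIcc (Icc_subset_uIcc ha) (Icc_subset_uIcc hb))

lemma IsACOn.integral_eq_sub (h : IsACOn T u u') (ha : a ∈ Icc 0 T) (hb : b ∈ Icc 0 T) :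
    ∫ t in a..b, u' t = u b - u a := by
  have h0 : (0 : ℝ) ∈ Icc 0 T := ⟨le_rfl, ha.1.trans ha.2⟩
  rw [← intervalIntegral.integral_interval_sub_left (h.intervalIntegrable h0 hb)
    (h.intervalIntegrable h0 ha), h.2 b hb, h.2 a ha]
  abel

end AbsolutelyContinuous

theorem polyline_cone_condition_general
    {V : Type*} [NormedAddCommGroup V] [InnerProductSpace ℝ V] [FiniteDimensional ℝ V]
    (m : ℕ) (n : Fin m → V) (cc : Fin m → ℝ)
    (Z : Set V) (hZ : Z = ⋂ i : Fin m, {x : V | (inner ℝ (n i) x : ℝ) ≤ cc i})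
    (f0 : V) (L : ℝ)
    (ustar ustar' : ℝ → V) (hsol : IsStopSol Z f0 L (fun _ => 1) ustar ustar')
    (k : ℕ)
    (dprev dnext : ℝ) (hd0 : 0 ≤ dprev) (hdd : dprev < dnext) (hdL : dnext ≤ L)
    (Bprev Bnext : V) (hBp : ustar dprev = Bprev) (hBn : ustar dnext = Bnext)
    (hactive : ∀ x ∈ Ioo dprev dnext,
      (∀ i : Fin m, (i : ℕ) < k - 1 → (inner ℝ (n i) (ustar x) : ℝ) = cc i) ∧
      ∀ i : Fin m, k - 1 ≤ (i : ℕ) → (inner ℝ (n i) (ustar x) : ℝ) < cc i) :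
    ∃ α : Fin m → ℝ, (∀ i, 0 ≤ α i) ∧
      -((dnext - dprev)⁻¹ • (Bnext - Bprev)) + f0 =
        ∑ i ∈ Finset.univ.filter (fun i : Fin m => (i : ℕ) < k - 1), α i • n i := by
  obtain ⟨hac, -, -, hnormal⟩ := hsol
  subst hZ hBp hBn
  have hsub : Icc dprev dnext ⊆ Icc 0 L := Icc_subset_Icc hd0 hdL
  have hprev : dprev ∈ Icc 0 L := hsub (left_mem_Icc.2 hdd.le)
  have hnext : dnext ∈ Icc 0 L := hsub (right_mem_Icc.2 hdd.le)
  refine mem_conicSpan.1 (mem_conicSpan_of_forall_inner_nonpos fun v hv => ?_)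
  have hslope : ∀ᵐ t ∂volume.restrict (Ioo dprev dnext), ⟪v, f0⟫ ≤ ⟪v, ustar' t⟫ := by
    filter_upwards [ae_restrict_of_ae_restrict_of_subset (Ioo_subset_Icc_self.trans hsub)
      hnormal, ae_restrict_mem measurableSet_Ioo] with t hw ht
    obtain ⟨hon, hoff⟩ := hactive t ht
    have hz : ∀ i, ⟪n i, ustar t⟫ ≤ cc i := fun i =>
      (lt_or_ge (i : ℕ) (k - 1)).elim (fun h => (hon i h).le) fun h => (hoff i h).le
    have hdir : ∀ i, ⟪n i, ustar t⟫ = cc i → ⟪n i, v⟫ ≤ 0 := fun i hi =>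
      (lt_or_ge (i : ℕ) (k - 1)).elim (fun h => hv i (by simp [h]))
        fun h => absurd hi (hoff i h).ne
    have hnonpos := inner_nonpos_of_mem_normalCone_polyhedron hw hz hdir
    rw [one_smul, inner_add_left, inner_neg_left, real_inner_comm, real_inner_comm v] at hnonpos
    linarith
  have hint := mul_inner_le_inner_intervalIntegral hdd.le (hac.intervalIntegrable hprev hnext)
    hslope
  rw [hac.integral_eq_sub hprev hnext, ← le_inv_mul_iff₀ (sub_pos.2 hdd)] at hint
  rw [inner_add_left, inner_neg_left, real_inner_smul_left, real_inner_comm v f0,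
    real_inner_comm v (_ - _)]
  linarith

/-- Cone condition along the loading polyline: the direction of a link of the
loading trajectory differs from `f₀` by a nonnegative combination of the
normals of the active constraints. -/
theorem polyline_cone_condition
    {V : Type*} [NormedAddCommGroup V] [InnerProductSpace ℝ V] [FiniteDimensional ℝ V]
    (m : ℕ) (n : Fin m → V) (cc : Fin m → ℝ) (hcc : ∀ i, 0 < cc i)
    (Z : Set V) (hZ : Z = ⋂ i : Fin m, {x : V | (inner ℝ (n i) x : ℝ) ≤ cc i})
    (f0 : V) (L : ℝ) (hL : 0 < L)
    (ustar ustar' : ℝ → V) (hsol : IsStopSol Z f0 L (fun _ => 1) ustar ustar')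
    (k : ℕ) (hk1 : 1 ≤ k) (hkm : k ≤ m)
    (dprev dnext : ℝ) (hd0 : 0 ≤ dprev) (hdd : dprev < dnext) (hdL : dnext ≤ L)
    (Bprev Bnext : V) (hBp : ustar dprev = Bprev) (hBn : ustar dnext = Bnext)
    (haff : ∀ x ∈ Icc dprev dnext,
      ustar x = Bprev + ((x - dprev) / (dnext - dprev)) • (Bnext - Bprev))
    (hactive : ∀ x ∈ Ioo dprev dnext,
      (∀ i : Fin m, (i : ℕ) < k - 1 → (inner ℝ (n i) (ustar x) : ℝ) = cc i) ∧
      ∀ i : Fin m, k - 1 ≤ (i : ℕ) → (inner ℝ (n i) (ustar x) : ℝ) < cc i) :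
    ∃ α : Fin m → ℝ, (∀ i, 0 ≤ α i) ∧
      -((dnext - dprev)⁻¹ • (Bnext - Bprev)) + f0 =
        ∑ i ∈ Finset.univ.filter (fun i : Fin m => (i : ℕ) < k - 1), α i • n i :=
  polyline_cone_condition_general m n cc Z hZ f0 L ustar ustar' hsol k dprev dnext hd0 hdd hdL Bprev
    Bnext hBp hBn hactive
end
end

section
/- A linear connection of springs realizes a Prandtl–Ishlinskii operator: consider a linear connection of springs with chains n = 0, …, S−1 and effective parameters ã_n, r̃_n, ρ̃_n = r̃_n/ã_n. Let g : [0,T] → ℝ be absolutely continuous with g(0) = 0. Suppose that for each chain n and each edge e of that chain there are absolutely continuous deformations ε_e and elastic deformations e_e with ε_e(0) = e_e(0) = 0 such that: (i) each e_e is the stop operator output with threshold ρ_e = r_e/a_e and input ε_e; (ii) within each chain the stresses coincide, a_e e_e(t) = a_{e'} e_{e'}(t) =: σ_n(t) for all edges e, e' of chain n and all t; and (iii) the total elongation along each chain equals the input: Σ_{e in chain n} ε_e(t) = g(t). Then the total reaction force R(t) = Σ_{n=0}^{S−1} σ_n(t) satisfies R(t) = Σ_{n=0}^{S−1} ã_n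 S_{ρ̃_n}[g](t); that is, R is the output of the Prandtl–Ishlinskii operator with weights ã_n and thresholds ρ̃_n applied to g. -/
open MeasureTheory Set

noncomputable section

/-- Output `e` of the one-dimensional stop operator with threshold `ρ` on
`[0,T]`, for an input with a.e. derivative `ε'`. -/
def IsStopOutput (ρ T : ℝ) (ε' e e' : ℝ → ℝ) : Prop :=
  IsACOn T e e' ∧ e 0 = 0 ∧ (∀ t ∈ Icc (0 : ℝ) T, |e t| ≤ ρ) ∧
    ∀ᵐ t ∂(volume.restrict (Icc (0 : ℝ) T)),
      ∀ z ∈ Icc (-ρ) ρ, 0 ≤ (ε' t - e' t) * (e t - z)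

/-- Edges of a linear connection: chain `n` has `c n + 2` edges, edge `⟨n,0⟩`
is the edge `(1, i_n+1)` and edge `⟨n, c n + 1⟩` is the edge `(i_{n+1}, N)`. -/
def LCEdge (S : ℕ) (c : Fin S → ℕ) : Type := Σ n : Fin S, Fin (c n + 2)

instance (S : ℕ) (c : Fin S → ℕ) : Fintype (LCEdge S c) := by unfold LCEdge; infer_instance

/-- The configuration space `E = ℝ^M` of a linear connection. -/
def LCSp (S : ℕ) (c : Fin S → ℕ) : Type := EuclideanSpace ℝ (LCEdge S c)

instance (S : ℕ) (c : Fin S → ℕ) : CoeFun (LCSp S c) (fun _ => LCEdge S c → ℝ) where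
  coe v := WithLp.ofLp v

instance (S : ℕ) (c : Fin S → ℕ) : NormedAddCommGroup (LCSp S c) := by
  unfold LCSp; infer_instance

instance (S : ℕ) (c : Fin S → ℕ) : InnerProductSpace ℝ (LCSp S c) := by
  unfold LCSp; infer_instance

/-- Diagonal rescaling map `v ↦ (w e * v e)_e`. -/
def dmulLC {S : ℕ} {c : Fin S → ℕ} (w : LCEdge S c → ℝ) :
    LCSp S c →ₗ[ℝ] LCSp S c where
  toFun v := WithLp.toLp 2 (fun e => w e * v e)
  map_add' x y := WithLp.ofLp_injective 2 <| funext fun e => by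
    show w e * (x e + y e) = w e * x e + w e * y e; ring
  map_smul' m x := WithLp.ofLp_injective 2 <| funext fun e => by
    show w e * (m * x e) = m * (w e * x e); ring

/-- The subspace `W` of deformations compatible with the geometric constraints
(at zero input): the sum of deformations along each chain is zero. -/
def WLC (S : ℕ) (c : Fin S → ℕ) : Submodule ℝ (LCSp S c) where
  carrier := {ε | ∀ n : Fin S, ∑ j : Fin (c n + 2), ε ⟨n, j⟩ = 0}
  zero_mem' := fun n => by
    have : ∀ j : Fin (c n + 2), (0 : LCSp S c) ⟨n, j⟩ = 0 := fun j => rfl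
    simp [this]
  add_mem' := by
    intro a b ha hb n
    have : ∀ j : Fin (c n + 2), (a + b) (⟨n, j⟩ : LCEdge S c) = a ⟨n, j⟩ + b ⟨n, j⟩ :=
      fun j => rfl
    simp [this, Finset.sum_add_distrib, ha n, hb n]
  smul_mem' := by
    intro m a ha n
    have : ∀ j : Fin (c n + 2), (m • a) (⟨n, j⟩ : LCEdge S c) = m * a ⟨n, j⟩ :=
      fun j => rfl
    simp [this, ← Finset.mul_sum, ha n]

/-- The subspace `V = A^{-1/2} W^⊥`. -/
def VLC {S : ℕ} {c : Fin S → ℕ} (a : LCEdge S c → ℝ) : Submodule ℝ (LCSp S c) :=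
  (WLC S c)ᗮ.map (dmulLC fun e => (Real.sqrt (a e))⁻¹)

/-- The box `C` of admissible stresses. -/
def CboxLC {S : ℕ} {c : Fin S → ℕ} (r : LCEdge S c → ℝ) : Set (LCSp S c) :=
  {σ | ∀ e, |σ e| ≤ r e}

/-- The rescaled polytope `Π = A^{-1/2} C`. -/
def PiLC {S : ℕ} {c : Fin S → ℕ} (a r : LCEdge S c → ℝ) : Set (LCSp S c) :=
  (dmulLC fun e => (Real.sqrt (a e))⁻¹) '' CboxLC r

/-- The vector `k₀`: component `1` on the edges `(i_n, N)` (the last edge of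
each chain), `0` elsewhere. -/
def k0LC (S : ℕ) (c : Fin S → ℕ) : LCSp S c := WithLp.toLp 2 fun e : LCEdge S c =>
  if (e.2 : ℕ) = c e.1 + 1 then (1 : ℝ) else 0

/-- Effective stiffness `ã_n` of chain `n`. -/
def atilLC {S : ℕ} {c : Fin S → ℕ} (a : LCEdge S c → ℝ) (n : Fin S) : ℝ :=
  (∑ j : Fin (c n + 2), (a ⟨n, j⟩)⁻¹)⁻¹

/-- Effective threshold `r̃_n` of chain `n`. -/
def rtilLC {S : ℕ} {c : Fin S → ℕ} (r : LCEdge S c → ℝ) (n : Fin S) : ℝ :=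
  Finset.univ.inf' ⟨⟨0, by omega⟩, Finset.mem_univ _⟩ fun j : Fin (c n + 2) => r ⟨n, j⟩

/-- The facet `Π_n` of `Π` on which the first edge of chain `n` is at its
positive threshold. -/
def PfaceLC {S : ℕ} {c : Fin S → ℕ} (a r : LCEdge S c → ℝ) (n : Fin S) :
    Set (LCSp S c) :=
  {v ∈ PiLC a r | Real.sqrt (a ⟨n, 0⟩) * v ⟨n, 0⟩ = r ⟨n, 0⟩}

/-- The face `F_j = V ∩ Π_1 ∩ ⋯ ∩ Π_j` of the polytope `Π ∩ V`. -/
def FfaceLC {S : ℕ} {c : Fin S → ℕ} (a r : LCEdge S c → ℝ) (j : ℕ) :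
    Set (LCSp S c) :=
  ↑(VLC a) ∩ PiLC a r ∩ ⋂ (n : Fin S) (_ : (n : ℕ) < j), PfaceLC a r n

/-!
Within a chain all springs carry the same stress `σ`, so the elastic deformation of edge `e` is
`σ / a_e` and the total elastic deformation of the chain is `E = σ / ã`. Conversely each
`e_e = E / (a_e Σ 1/a)` is a fixed positive multiple of `E`, so the stop inequalities of the
single springs, tested at the correspondingly rescaled points, add up to the stop inequality for
`E` with input `Σ ε_e'` and threshold `r̃ / ã`, `r̃` being the largest stress every spring
tolerates. Finally `Σ ε_e' = g'` a.e., by the Lebesgue differentiation theorem, since both are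
derivatives of the absolutely continuous function `Σ ε_e = g`.
-/

open scoped Topology

section AbsolutelyContinuous

variable {W : Type*} [NormedAddCommGroup W] [NormedSpace ℝ W] {T : ℝ}

theorem IsACOn.finsetSum {ι : Type*} (s : Finset ι) {u u' : ι → ℝ → W}
    (h : ∀ i ∈ s, IsACOn T (u i) (u' i)) :
    IsACOn T (fun t => ∑ i ∈ s, u i t) (fun t => ∑ i ∈ s, u' i t) := by
  refine ⟨Finset.sum_fn s u' ▸ IntervalIntegrable.sum s fun i hi => (h i hi).1, fun t ht => ?_⟩
  have hsub : uIcc 0 t ⊆ uIcc 0 T := by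
    rw [uIcc_of_le ht.1, uIcc_of_le (ht.1.trans ht.2)]
    exact Icc_subset_Icc le_rfl ht.2
  rw [intervalIntegral.integral_finsetSum fun i hi => (h i hi).1.mono_set hsub,
    ← Finset.sum_add_distrib]
  exact Finset.sum_congr rfl fun i hi => (h i hi).2 t ht

theorem IsACOn.ae_eq_of_eqOn [CompleteSpace W] {u v u' v' : ℝ → W}
    (hu : IsACOn T u u') (hv : IsACOn T v v') (huv : EqOn u v (Icc 0 T)) :
    u' =ᵐ[volume.restrict (Icc (0 : ℝ) T)] v' := by
  refine (ae_restrict_iff' measurableSet_Icc).2 ?_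
  have hne : ∀ b : ℝ, ∀ᵐ t, t ≠ b := fun b => by simp [ae_iff, measure_singleton]
  filter_upwards [hu.1.ae_hasDerivAt_integral, hv.1.ae_hasDerivAt_integral, hne 0, hne T]
    with t hdu hdv ht0 htT ht
  have htIoo : t ∈ Ioo 0 T := ⟨ht.1.lt_of_ne' ht0, ht.2.lt_of_ne htT⟩
  have hT : (0 : ℝ) ≤ T := ht.1.trans ht.2
  have h0 : (0 : ℝ) ∈ Icc 0 T := ⟨le_rfl, hT⟩
  have hmem : t ∈ uIcc 0 T := by rw [uIcc_of_le hT]; exact ht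
  have hprim : (fun s => ∫ x in (0 : ℝ)..s, u' x) =ᶠ[𝓝 t] fun s => ∫ x in (0 : ℝ)..s, v' x := by
    filter_upwards [Icc_mem_nhds htIoo.1 htIoo.2] with s hs
    have := huv hs
    rw [hu.2 s hs, hv.2 s hs, huv h0] at this
    exact add_left_cancel this
  exact (hdu hmem 0 left_mem_uIcc).unique
    ((hdv hmem 0 left_mem_uIcc).congr_of_eventuallyEq hprim)

end AbsolutelyContinuous

theorem IsStopOutput.congr_input {ρ T : ℝ} {ε₁' ε₂' e e' : ℝ → ℝ}
    (h : IsStopOutput ρ T ε₁' e e') (hε : ε₁' =ᵐ[volume.restrict (Icc (0 : ℝ) T)] ε₂') :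
    IsStopOutput ρ T ε₂' e e' := by
  refine ⟨h.1, h.2.1, h.2.2.1, ?_⟩
  filter_upwards [h.2.2.2, hε] with t ht hεt
  rwa [← hεt]

theorem sum_eq_mul_sum_inv_of_mul_eq {ι K : Type*} [Field K] (s : Finset ι) {a x : ι → K}
    {σ : K} (ha : ∀ i ∈ s, a i ≠ 0) (h : ∀ i ∈ s, a i * x i = σ) :
    ∑ i ∈ s, x i = σ * ∑ i ∈ s, (a i)⁻¹ := by
  rw [Finset.mul_sum]
  refine Finset.sum_congr rfl fun i hi => ?_
  rw [← h i hi, mul_comm (a i), mul_inv_cancel_right₀ (ha i hi)]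

theorem IsStopOutput.series {ι : Type*} [Fintype ι] (hι : (Finset.univ : Finset ι).Nonempty)
    {a r : ι → ℝ} (ha : ∀ i, 0 < a i) {T : ℝ} {ε' e e' : ι → ℝ → ℝ}
    (hstop : ∀ i, IsStopOutput (r i / a i) T (ε' i) (e i) (e' i))
    (hstress : ∀ i j, ∀ t ∈ Icc (0 : ℝ) T, a i * e i t = a j * e j t) :
    IsStopOutput (Finset.univ.inf' hι r / (∑ i, (a i)⁻¹)⁻¹) T (fun t => ∑ i, ε' i t)
      (fun t => ∑ i, e i t) (fun t => ∑ i, e' i t) := by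
  set ρ := Finset.univ.inf' hι r
  set A := ∑ i, (a i)⁻¹
  have hA : 0 < A := Finset.sum_pos (fun i _ => inv_pos.2 (ha i)) hι
  have htotal : ∀ i, ∀ t ∈ Icc (0 : ℝ) T, ∑ j, e j t = a i * e i t * A := fun i t ht =>
    sum_eq_mul_sum_inv_of_mul_eq _ (fun j _ => (ha j).ne') fun j _ => hstress j i t ht
  have hstress_le : ∀ i, ∀ t ∈ Icc (0 : ℝ) T, |a i * e i t| ≤ ρ := fun i t ht =>
    Finset.le_inf' _ _ fun j _ => by
      rw [hstress i j t ht, abs_mul, abs_of_pos (ha j), ← le_div_iff₀' (ha j)]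
      exact (hstop j).2.2.1 t ht
  rw [div_inv_eq_mul]
  refine ⟨IsACOn.finsetSum _ fun i _ => (hstop i).1, Finset.sum_eq_zero fun i _ => (hstop i).2.1,
    fun t ht => ?_, ?_⟩
  · obtain ⟨i₀, -⟩ := id hι
    show |∑ i, e i t| ≤ ρ * A
    rw [htotal i₀ t ht, abs_mul, abs_of_pos hA]
    exact mul_le_mul_of_nonneg_right (hstress_le i₀ t ht) hA.le
  · filter_upwards [ae_all_iff.2 fun i => (hstop i).2.2.2, ae_restrict_mem measurableSet_Icc]
      with t hvi ht z hz
    rw [← Finset.sum_sub_distrib, Finset.sum_mul]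
    refine Finset.sum_nonneg fun i _ => ?_
    have hai₀ : a i ≠ 0 := (ha i).ne'
    have hai : 0 < a i * A := mul_pos (ha i) hA
    have hzi : z / (a i * A) ∈ Icc (-(r i / a i)) (r i / a i) := by
      rw [mem_Icc, ← abs_le, abs_div, abs_of_pos hai, div_le_iff₀ hai]
      calc |z| ≤ ρ * A := abs_le.2 hz
        _ ≤ r i * A := mul_le_mul_of_nonneg_right (Finset.inf'_le _ (Finset.mem_univ i)) hA.le
        _ = r i / a i * (a i * A) := by field_simp
    calc 0 ≤ a i * A * ((ε' i t - e' i t) * (e i t - z / (a i * A))) :=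
          mul_nonneg hai.le (hvi i _ hzi)
      _ = (ε' i t - e' i t) * (∑ j, e j t - z) := by
          rw [htotal i t ht]; field_simp

theorem linear_connection_is_PI_general
    (S : ℕ) (c : Fin S → ℕ)
    (a r : LCEdge S c → ℝ) (ha : ∀ e, 0 < a e)
    (T : ℝ)
    (g g' : ℝ → ℝ) (hg : IsACOn T g g')
    (ε ε' ee ee' : LCEdge S c → ℝ → ℝ)
    (hεac : ∀ e, IsACOn T (ε e) (ε' e))
    (hstop : ∀ e : LCEdge S c, IsStopOutput (r e / a e) T (ε' e) (ee e) (ee' e))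
    (hstress : ∀ n : Fin S, ∀ j j' : Fin (c n + 2), ∀ t ∈ Icc (0 : ℝ) T,
      a ⟨n, j⟩ * ee ⟨n, j⟩ t = a ⟨n, j'⟩ * ee ⟨n, j'⟩ t)
    (hsum : ∀ n : Fin S, ∀ t ∈ Icc (0 : ℝ) T, ∑ j : Fin (c n + 2), ε ⟨n, j⟩ t = g t) :
    ∃ E E' : Fin S → ℝ → ℝ,
      (∀ n, IsStopOutput (rtilLC r n / atilLC a n) T g' (E n) (E' n)) ∧
      ∀ t ∈ Icc (0 : ℝ) T,
        ∑ n : Fin S, a ⟨n, 0⟩ * ee ⟨n, 0⟩ t = ∑ n : Fin S, atilLC a n * E n t := by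
  refine ⟨fun n t => ∑ j, ee ⟨n, j⟩ t, fun n t => ∑ j, ee' ⟨n, j⟩ t, fun n => ?_,
    fun t ht => Finset.sum_congr rfl fun n _ => ?_⟩
  · have hinput : (fun t => ∑ j, ε' ⟨n, j⟩ t) =ᵐ[volume.restrict (Icc 0 T)] g' :=
      (IsACOn.finsetSum _ fun j _ => hεac ⟨n, j⟩).ae_eq_of_eqOn hg (hsum n)
    exact (IsStopOutput.series _ (fun j => ha ⟨n, j⟩) (fun j => hstop ⟨n, j⟩)
      (hstress n)).congr_input hinput
  · have hA : ∑ j, (a ⟨n, j⟩)⁻¹ ≠ 0 :=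
      (Finset.sum_pos (fun j _ => inv_pos.2 (ha ⟨n, j⟩)) Finset.univ_nonempty).ne'
    show a ⟨n, 0⟩ * ee ⟨n, 0⟩ t = atilLC a n * ∑ j, ee ⟨n, j⟩ t
    rw [sum_eq_mul_sum_inv_of_mul_eq _ (fun j _ => (ha ⟨n, j⟩).ne')
      fun j _ => hstress n j 0 t ht, atilLC, mul_comm (a ⟨n, 0⟩ * _), inv_mul_cancel_left₀ hA]

/-- A linear connection of springs realizes a Prandtl–Ishlinskii operator:
the total reaction force is the output of the PI operator with weights `ã_n`
and thresholds `ρ̃_n = r̃_n/ã_n` applied to the controlled elongation `g`. -/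
theorem linear_connection_is_PI
    (S : ℕ) (hS : 1 ≤ S) (c : Fin S → ℕ)
    (a r : LCEdge S c → ℝ) (ha : ∀ e, 0 < a e) (hr : ∀ e, 0 < r e)
    (T : ℝ) (hT : 0 < T)
    (g g' : ℝ → ℝ) (hg : IsACOn T g g') (hg0 : g 0 = 0)
    (ε ε' ee ee' : LCEdge S c → ℝ → ℝ)
    (hε0 : ∀ e, ε e 0 = 0) (hee0 : ∀ e, ee e 0 = 0)
    (hεac : ∀ e, IsACOn T (ε e) (ε' e))
    (hstop : ∀ e : LCEdge S c, IsStopOutput (r e / a e) T (ε' e) (ee e) (ee' e))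
    (hstress : ∀ n : Fin S, ∀ j j' : Fin (c n + 2), ∀ t ∈ Icc (0 : ℝ) T,
      a ⟨n, j⟩ * ee ⟨n, j⟩ t = a ⟨n, j'⟩ * ee ⟨n, j'⟩ t)
    (hsum : ∀ n : Fin S, ∀ t ∈ Icc (0 : ℝ) T, ∑ j : Fin (c n + 2), ε ⟨n, j⟩ t = g t) :
    ∃ E E' : Fin S → ℝ → ℝ,
      (∀ n, IsStopOutput (rtilLC r n / atilLC a n) T g' (E n) (E' n)) ∧
      ∀ t ∈ Icc (0 : ℝ) T,
        ∑ n : Fin S, a ⟨n, 0⟩ * ee ⟨n, 0⟩ t = ∑ n : Fin S, atilLC a n * E n t :=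
  linear_connection_is_PI_general S c a r ha T g g' hg ε ε' ee ee' hεac hstop hstress hsum

end
end
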